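/- arXiv:1206.2102 — 4 statements merged into one kernel-verified Lean document; each statement's English description precedes it below -/
import Mathlib

section
/- For every polynomial f ∈ O_L[u] with coefficients in the ring of integers O_L of L, the element π^{−1}·Tr(f) is a polynomial in w with all coefficients in O_L. (Equivalently: for the special Lubin–Tate group, ψ = q^{−1}·φ_q^{−1}∘Tr maps O_L[u] into (π/q)·O_L[u].) -/
/-!
The element `u` is a root of `X ^ q + π X - w` and `[L(u) : L(w)] = q`, so `1, u, …, u^(q-1)`
is a power basis of `L(u)` over `L(w)`. Reading off the diagonal of multiplication by `u ^ n`
in this basis gives `Tr(u^n) = q, 0, …, 0, -(q-1)π` for `n < q`, and `u ^ q = w - π u` gives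
`Tr(u^(n+q)) = w Tr(u^n) - π Tr(u^(n+1))`. Since `π ∣ q` in `O_L`, induction shows that every
`Tr(u^n)` lies in `π · O_L[w]`, and the claim follows by `L(w)`-linearity of the trace.
-/

open Polynomial IntermediateField

section NonnegSubring

variable {L : Type*} [Field L] (v : L → EReal) (hv0 : v 0 = ⊤) (hv1 : v 1 = 0)
  (hvmul : ∀ x y, v (x * y) = v x + v y) (hvadd : ∀ x y, min (v x) (v y) ≤ v (x + y))

include hv1 hvmul in
lemma nonneg_apply_neg_one : 0 ≤ v (-1) := by
  by_contra! h
  have := EReal.add_lt_add h h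
  rw [← hvmul, neg_mul_neg, one_mul, hv1, add_zero] at this
  exact this.false

def nonnegSubring : Subring L where
  carrier := {x | 0 ≤ v x}
  mul_mem' {x y} hx hy := by
    show 0 ≤ v (x * y)
    exact hvmul x y ▸ add_nonneg hx hy
  one_mem' := hv1.ge
  add_mem' {x y} hx hy := (le_min hx hy).trans (hvadd x y)
  zero_mem' := by simp [hv0]
  neg_mem' {x} hx := by
    show 0 ≤ v (-x)
    rw [neg_eq_neg_one_mul, hvmul]
    exact add_nonneg (nonneg_apply_neg_one v hv1 hvmul) hx

lemma mem_nonnegSubring {x : L} : x ∈ nonnegSubring v hv0 hv1 hvmul hvadd ↔ 0 ≤ v x := Iff.rfl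

include hv0 in
lemma ne_zero_of_apply_eq_coe {y : L} {r : ℝ} (hy : v y = r) : y ≠ 0 := by
  rintro rfl
  rw [hv0] at hy
  exact EReal.coe_ne_top r hy.symm

include hv0 hvmul in
lemma nonneg_apply_div {x y : L} {r : ℝ} (hy : v y = r) (hx : r ≤ v x) : 0 ≤ v (x / y) := by
  have hy0 := ne_zero_of_apply_eq_coe v hv0 hy
  by_contra! h
  have := EReal.add_lt_add_right_coe h r
  rw [← hy, ← hvmul, div_mul_cancel₀ x hy0, zero_add, hy] at this
  exact (hx.trans_lt this).false

end NonnegSubring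

lemma Polynomial.natDegree_X_pow_add_C_mul_X {R : Type*} [Semiring R] [Nontrivial R] {q : ℕ}
    (hq : 2 ≤ q) (a : R) : (X ^ q + C a * X).natDegree = q := by
  compute_degree! <;> simp [show q ≠ 1 by omega, show 1 ≤ q by omega]

namespace RatFunc

variable {K : Type*} [Field K]

noncomputable def powerBasisX (f : RatFunc K) (hf : ¬∃ c, f = C c) :
    PowerBasis K⟮f⟯ (RatFunc K) :=
  (adjoin.powerBasis (f.isAlgebraic_adjoin_simple_X hf).isIntegral).map
    (IntermediateField.adjoinXEquiv K⟮f⟯)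

@[simp]
lemma powerBasisX_gen (f : RatFunc K) (hf : ¬∃ c, f = C c) : (powerBasisX f hf).gen = X := rfl

lemma powerBasisX_dim (f : RatFunc K) (hf : ¬∃ c, f = C c) :
    (powerBasisX f hf).dim = max f.num.natDegree f.denom.natDegree := by
  rw [← (powerBasisX f hf).finrank, finrank_eq_max_natDegree]

lemma not_exists_algebraMap_eq_C {p : K[X]} (hp : p.natDegree ≠ 0) :
    ¬∃ c, algebraMap K[X] (RatFunc K) p = C c := by
  rintro ⟨c, hc⟩
  apply hp
  rw [← num_algebraMap p, hc, num_C, natDegree_C]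

lemma exists_powerBasis_of_eq_X_pow_add_C_mul_X {q : ℕ} (hq : 2 ≤ q) (a : K) {w : RatFunc K}
    (hw : w = X ^ q + C a * X) :
    ∃ pb : PowerBasis K⟮w⟯ (RatFunc K), pb.gen = X ∧ pb.dim = q ∧
      pb.gen ^ pb.dim = AdjoinSimple.gen K w • 1 - algebraMap K K⟮w⟯ a • pb.gen := by
  have hw' : w = algebraMap K[X] (RatFunc K) (.X ^ q + .C a * .X) := by
    simp [hw, algebraMap_X, algebraMap_C]
  have hdeg := natDegree_X_pow_add_C_mul_X hq a
  let pb := powerBasisX w (hw' ▸ not_exists_algebraMap_eq_C (by omega))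
  have hdim : pb.dim = q := by
    rw [powerBasisX_dim, hw', num_algebraMap, denom_algebraMap, natDegree_one, max_zero, hdeg]
  refine ⟨pb, rfl, hdim, ?_⟩
  simp [pb, hdim, Algebra.smul_def, hw]

end RatFunc

namespace PowerBasis

variable {K E : Type*} [CommRing K] [CommRing E] [Algebra K E] (pb : PowerBasis K E)

lemma basis_repr_gen_pow_of_lt {m : ℕ} (hm : m < pb.dim) :
    pb.basis.repr (pb.gen ^ m) = Finsupp.single ⟨m, hm⟩ 1 := by
  rw [← pb.basis_eq_pow ⟨m, hm⟩, pb.basis.repr_self]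

variable {pb} {a b : K} (hgen : pb.gen ^ pb.dim = b • 1 - a • pb.gen)
include hgen

lemma gen_pow_add_dim (n : ℕ) :
    pb.gen ^ (n + pb.dim) = b • pb.gen ^ n - a • pb.gen ^ (n + 1) := by
  rw [pow_add, hgen, mul_sub, mul_smul_comm, mul_smul_comm, mul_one, pow_succ]

lemma basis_repr_gen_pow_add_dim {n : ℕ} (hn : n + 1 < pb.dim) :
    pb.basis.repr (pb.gen ^ (n + pb.dim)) =
      b • Finsupp.single ⟨n, by omega⟩ 1 - a • Finsupp.single ⟨n + 1, hn⟩ 1 := by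
  rw [gen_pow_add_dim hgen, map_sub, map_smul, map_smul,
    basis_repr_gen_pow_of_lt, basis_repr_gen_pow_of_lt]

lemma basis_repr_gen_pow_mul_basis_self {n : ℕ} (hn : n < pb.dim) (j : Fin pb.dim) :
    pb.basis.repr (pb.gen ^ n * pb.basis j) j =
      (if n = 0 then 1 else 0) - (if n + 1 = pb.dim ∧ (j : ℕ) ≠ 0 then a else 0) := by
  have hj := j.isLt
  rw [pb.basis_eq_pow, ← pow_add]
  rcases lt_or_ge (n + j) pb.dim with hlt | hge
  · rw [basis_repr_gen_pow_of_lt _ hlt]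
    simp only [Finsupp.single_apply, Fin.ext_iff]
    split_ifs <;> first | omega | simp
  · obtain ⟨m, hm⟩ : ∃ m, n + j = m + pb.dim := ⟨n + j - pb.dim, by omega⟩
    rw [hm, basis_repr_gen_pow_add_dim hgen (by omega)]
    simp only [Finsupp.sub_apply, Finsupp.smul_apply, Finsupp.single_apply, Fin.ext_iff]
    split_ifs <;> first | omega | simp

lemma trace_gen_pow_of_lt {n : ℕ} (hn : n < pb.dim) :
    Algebra.trace K E (pb.gen ^ n) =
      (if n = 0 then (pb.dim : K) else 0) -
        (if n + 1 = pb.dim then (pb.dim - 1 : ℕ) * a else 0) := by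
  rw [Algebra.trace_eq_matrix_trace pb.basis, Matrix.trace]
  simp only [Matrix.diag_apply, Algebra.leftMulMatrix_eq_repr_mul,
    basis_repr_gen_pow_mul_basis_self hgen hn]
  rw [Finset.sum_sub_distrib]
  congr 1
  · split_ifs <;> simp
  · split_ifs with h
    · rw [Finset.sum_ite, Finset.sum_const_zero, add_zero, Finset.sum_const, nsmul_eq_mul]
      have hfilter : ({j | n + 1 = pb.dim ∧ (j : ℕ) ≠ 0} : Finset (Fin pb.dim)) =
          Finset.univ.erase (⟨0, by omega⟩ : Fin pb.dim) := by
        ext j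
        simp [h, Fin.ext_iff]
      rw [hfilter, Finset.card_erase_of_mem (Finset.mem_univ _), Finset.card_univ,
        Fintype.card_fin]
    · simp [h]

lemma trace_gen_pow_add_dim (n : ℕ) :
    Algebra.trace K E (pb.gen ^ (n + pb.dim)) =
      b * Algebra.trace K E (pb.gen ^ n) - a * Algebra.trace K E (pb.gen ^ (n + 1)) := by
  rw [gen_pow_add_dim hgen, map_sub, map_smul, map_smul, smul_eq_mul, smul_eq_mul]

variable {T : Subring K} (hd : 2 ≤ pb.dim) (ha : a ∈ T) (hb : b ∈ T)
  (hdim : ∃ t ∈ T, (pb.dim : K) = a * t)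
include hd ha hb hdim

lemma exists_trace_gen_pow_eq_mul (n : ℕ) :
    ∃ t ∈ T, Algebra.trace K E (pb.gen ^ n) = a * t := by
  induction n using Nat.strong_induction_on with
  | _ n ih =>
  rcases lt_or_ge n pb.dim with hn | hn
  · obtain ⟨t, ht, hdt⟩ := hdim
    refine ⟨(if n = 0 then t else 0) - (if n + 1 = pb.dim then ((pb.dim - 1 : ℕ) : K) else 0),
      sub_mem ?_ ?_, ?_⟩
    · split_ifs <;> simp [ht]
    · split_ifs <;> simp
    · rw [trace_gen_pow_of_lt hgen hn, mul_sub]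
      split_ifs <;> simp [hdt, mul_comm]
  · obtain ⟨m, rfl⟩ := Nat.exists_eq_add_of_le' hn
    obtain ⟨t₀, ht₀, h₀⟩ := ih m (by omega)
    obtain ⟨t₁, ht₁, h₁⟩ := ih (m + 1) (by omega)
    refine ⟨b * t₀ - a * t₁, sub_mem (mul_mem hb ht₀) (mul_mem ha ht₁), ?_⟩
    rw [trace_gen_pow_add_dim hgen, h₀, h₁]
    ring

lemma exists_trace_aeval_gen_eq_mul (f : K[X]) (hf : ∀ i, f.coeff i ∈ T) :
    ∃ t ∈ T, Algebra.trace K E (aeval pb.gen f) = a * t := by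
  choose t ht htr using exists_trace_gen_pow_eq_mul hgen hd ha hb hdim
  refine ⟨∑ i ∈ Finset.range (f.natDegree + 1), f.coeff i * t i,
    sum_mem fun i _ => mul_mem (hf i) (ht i), ?_⟩
  simp only [aeval_eq_sum_range, map_sum, map_smul, htr, smul_eq_mul, Finset.mul_sum]
  exact Finset.sum_congr rfl fun i _ => by ring

end PowerBasis

theorem stmt_6_general
    (L : Type*) [Field L]
    (vπ : L → EReal)
    (hv0 : vπ 0 = ⊤) (hv1 : vπ 1 = 0)
    (hvmul : ∀ x y : L, vπ (x * y) = vπ x + vπ y)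
    (hvadd : ∀ x y : L, min (vπ x) (vπ y) ≤ vπ (x + y))
    (q : ℕ) (hq : 2 ≤ q) (π : L) (hπ : vπ π = 1)
    (hvq : (1 : EReal) ≤ vπ ((q : L)))
    (w : RatFunc L) (hw : w = RatFunc.X ^ q + RatFunc.C π * RatFunc.X)
    (f : Polynomial L) (hf : ∀ n : ℕ, (0 : EReal) ≤ vπ (f.coeff n)) :
    ∃ g : Polynomial L, (∀ n : ℕ, (0 : EReal) ≤ vπ (g.coeff n)) ∧
      (RatFunc.C π)⁻¹ *
          ((Algebra.trace (IntermediateField.adjoin L {w}) (RatFunc L)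
              (Polynomial.aeval (RatFunc.X : RatFunc L) f) :
                IntermediateField.adjoin L {w}) : RatFunc L)
        = Polynomial.aeval w g := by
  set R := nonnegSubring vπ hv0 hv1 hvmul hvadd
  have hπ' : vπ π = (1 : ℝ) := by rw [hπ, EReal.coe_one]
  have hπ0 : π ≠ 0 := ne_zero_of_apply_eq_coe vπ hv0 hπ'
  have hπR : π ∈ R := by rw [mem_nonnegSubring, hπ]; exact zero_le_one
  have hqR : (q : L) / π ∈ R := nonneg_apply_div vπ hv0 hvmul hπ' (by rwa [EReal.coe_one])
  obtain ⟨pb, hpb, hdim, hgen⟩ := RatFunc.exists_powerBasis_of_eq_X_pow_add_C_mul_X hq π hw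
  set T : Subring L⟮w⟯ :=
    ((aeval (AdjoinSimple.gen L w)).toRingHom.comp (mapRingHom R.subtype)).range
  have hRT : ∀ x ∈ R, algebraMap L L⟮w⟯ x ∈ T := fun x hx => ⟨C ⟨x, hx⟩, by simp⟩
  obtain ⟨_, ⟨g, rfl⟩, htr⟩ := pb.exists_trace_aeval_gen_eq_mul (T := T) hgen (hdim ▸ hq)
    (hRT π hπR) ⟨X, by simp⟩
    ⟨_, hRT _ hqR, by rw [hdim, ← map_mul, mul_div_cancel₀ _ hπ0, map_natCast]⟩
    (f.map (algebraMap L L⟮w⟯)) (fun i => by simpa using hRT _ (hf i))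
  refine ⟨g.map R.subtype, fun n => by rw [coeff_map]; exact (g.coeff n).2, ?_⟩
  rw [aeval_map_algebraMap, hpb] at htr
  rw [htr]
  simp [hπ0]

/-- Same setting (`w = u^q + π u` in `L(u)`, `Tr` the trace of `L(w) ⊆ L(u)`,
`vπ π = 1`, `vπ q ≥ 1`; the ring of integers `O_L` is `{x | 0 ≤ vπ x}`).  For every polynomial
`f ∈ O_L[u]`, the element `π⁻¹ Tr(f(u))` is a polynomial in `w` with all coefficients in
`O_L`. -/
theorem stmt_6
    (L : Type*) [Field L] [CharZero L]
    (vπ : L → EReal)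
    (hv0 : vπ 0 = ⊤) (hv1 : vπ 1 = 0)
    (hvmul : ∀ x y : L, vπ (x * y) = vπ x + vπ y)
    (hvadd : ∀ x y : L, min (vπ x) (vπ y) ≤ vπ (x + y))
    (q : ℕ) (hq : 2 ≤ q) (π : L) (hπ : vπ π = 1)
    (hvq : (1 : EReal) ≤ vπ ((q : L)))
    (w : RatFunc L) (hw : w = RatFunc.X ^ q + RatFunc.C π * RatFunc.X)
    (f : Polynomial L) (hf : ∀ n : ℕ, (0 : EReal) ≤ vπ (f.coeff n)) :
    ∃ g : Polynomial L, (∀ n : ℕ, (0 : EReal) ≤ vπ (g.coeff n)) ∧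
      (RatFunc.C π)⁻¹ *
          ((Algebra.trace (IntermediateField.adjoin L {w}) (RatFunc L)
              (Polynomial.aeval (RatFunc.X : RatFunc L) f) :
                IntermediateField.adjoin L {w}) : RatFunc L)
        = Polynomial.aeval w g :=
  stmt_6_general L vπ hv0 hv1 hvmul hvadd q hq π hπ hvq w hw f hf
end

section
/- The sequence 0 → L → R_L →(∂) R_L →(Res) L → 0 is exact, where the first map is the inclusion of constants. That is: (1) the kernel of ∂ on R_L is exactly the set of constant series L·1; (2) the image of ∂ equals the kernel of Res, i.e. an element f ∈ R_L can be written f = ∂h with h ∈ R_L if and only if Res(f) = 0; (3) Res : R_L → L is surjective. -/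
/-!
Multiplication by an integral power series is defined on Laurent series whose coefficients
tend to zero towards `-∞`, and multiplying by `g'` undoes multiplying by `(g')⁻¹`
(associativity of the Cauchy product, checked on truncations). Hence `∂ h = f` means
`dh/du = g' f`. Comparing coefficients, `dh/du = 0` forces `h` to be constant and the
coefficient of `u⁻¹` of `dh/du` always vanishes; conversely, when `Res f = 0`, dividing the
`n`-th coefficient of `g' f` by `n + 1` gives an antiderivative, which stays in the Robba ring
because `v_p(n) = o(n)`. Finally `Res (ρ u⁻¹) = ρ`.
-/

/-- Convergence of the series `∑ f i` to `a`, with respect to the valuation `v`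
(in an ultrametric field, via the partial sums). -/
def HasVSum {L : Type*} [Field L] (v : L → EReal) (f : ℕ → L) (a : L) : Prop :=
  ∀ M : ℝ, ∃ N : ℕ, ∀ n ≥ N, (M : EReal) ≤ v ((∑ i ∈ Finset.range n, f i) - a)

/-- A Laurent coefficient family `f : ℤ → L` belongs to the Robba ring `R_L`: there is `r > 0`
such that for every `t ∈ (0, r]`, `v (f n) + n t → ∞` as `|n| → ∞`. -/
def IsRobba {L : Type*} [Field L] (v : L → EReal) (f : ℤ → L) : Prop :=
  ∃ r : ℝ, 0 < r ∧ ∀ t : ℝ, 0 < t → t ≤ r → ∀ M : ℝ, ∃ N : ℕ, ∀ n : ℤ,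
    (N : ℤ) ≤ |n| → (M : EReal) ≤ v (f n) + (((n : ℝ) * t : ℝ) : EReal)

/-- `b = ∂ f = (g')⁻¹ · (df/du)`, where `gderInv` is the coefficient family of `(g')⁻¹`:
coefficientwise, `b n` is the (convergent) Cauchy product
`∑_{i ≥ 0} (g')⁻¹_i · (n - i + 1) f_{n - i + 1}`. -/
def IsDer {L : Type*} [Field L] (v : L → EReal) (gderInv : ℕ → L) (f b : ℤ → L) : Prop :=
  ∀ n : ℤ, HasVSum v
    (fun i : ℕ => gderInv i * (((n - (i : ℤ) + 1 : ℤ) : L) * f (n - (i : ℤ) + 1))) (b n)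

/-- `Res f = ρ`: the coefficient of `u⁻¹` in `g' · f` is `ρ`, where `gder` is the coefficient
family of `g'`. -/
def HasRes {L : Type*} [Field L] (v : L → EReal) (gder : ℕ → L) (f : ℤ → L) (ρ : L) : Prop :=
  HasVSum v (fun i : ℕ => gder i * f (-1 - (i : ℤ))) ρ

open Finset Filter Asymptotics

lemma EReal.coe_le_add_coe_iff {x : EReal} {M s : ℝ} :
    (M : EReal) ≤ x + s ↔ ((M - s : ℝ) : EReal) ≤ x := by
  rw [EReal.coe_sub, EReal.sub_le_iff_le_add (.inl (EReal.coe_ne_bot s))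
    (.inl (EReal.coe_ne_top s))]

lemma exists_forall_min_le_of_eventually_cofinite {ι : Type*} {g : ι → EReal}
    (hg : ∀ i, g i ≠ ⊥) {h : ι → ℝ} (H : ∀ᶠ i in cofinite, (h i : EReal) ≤ g i) :
    ∃ K : ℝ, ∀ i, ((min K (h i) : ℝ) : EReal) ≤ g i := by
  obtain ⟨K, hK⟩ := ((eventually_cofinite.1 H).image fun i => (g i).toReal).bddBelow
  refine ⟨K, fun i => ?_⟩
  by_cases hi : (h i : EReal) ≤ g i
  · exact (EReal.coe_le_coe_iff.2 (min_le_right _ _)).trans hi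
  · exact (EReal.coe_le_coe_iff.2 ((min_le_left _ _).trans (hK ⟨i, hi, rfl⟩))).trans
      (EReal.coe_toReal_le (hg i))

lemma Int.exists_forall_le_abs_iff {P : ℤ → Prop} :
    (∃ N : ℕ, ∀ n : ℤ, (N : ℤ) ≤ |n| → P n) ↔ ∀ᶠ n in cofinite, P n := by
  rw [Int.cofinite_eq, eventually_sup, eventually_atBot, eventually_atTop]
  constructor
  · rintro ⟨N, hN⟩
    exact ⟨⟨-N, fun n hn => hN n (by rw [le_abs']; omega)⟩,
      ⟨N, fun n hn => hN n (by rw [le_abs']; omega)⟩⟩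
  · rintro ⟨⟨a, ha⟩, ⟨b, hb⟩⟩
    refine ⟨max a.natAbs b.natAbs, fun n hn => ?_⟩
    rw [le_abs'] at hn
    rcases le_or_gt 0 n with h | h
    · exact hb n (by omega)
    · exact ha n (by omega)

lemma tendsto_natAbs_cofinite_atTop : Tendsto Int.natAbs cofinite atTop := by
  rw [Int.cofinite_eq, tendsto_sup]
  exact ⟨tendsto_atTop.2 fun N => eventually_atBot.2 ⟨-N, fun m hm => by omega⟩,
    tendsto_atTop.2 fun N => eventually_atTop.2 ⟨N, fun m hm => by omega⟩⟩

lemma tendsto_sub_natCast_atBot (n : ℤ) : Tendsto (fun i : ℕ => n - i) atTop atBot :=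
  tendsto_atBot.2 fun b => eventually_atTop.2 ⟨(n - b).toNat, fun i hi => by omega⟩

lemma isLittleO_padicValNat (p : ℕ) :
    (fun n : ℕ => (padicValNat p n : ℝ)) =o[atTop] (fun n => (n : ℝ)) := by
  refine IsBigO.trans_isLittleO (g := fun n : ℕ => Real.logb p n) ?_
    (Real.isLittleO_logb_id_atTop.comp_tendsto tendsto_natCast_atTop_atTop)
  refine isBigO_of_le _ fun n => ?_
  rw [Real.norm_of_nonneg (Nat.cast_nonneg _)]
  exact ((Nat.cast_le.2 (padicValNat_le_nat_log n)).trans (Real.natLog_le_logb n p)).trans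
    (Real.le_norm_self _)

lemma PowerSeries.mk_mul_mk_eq_one_iff {R : Type*} [Semiring R] {A B : ℕ → R} :
    PowerSeries.mk A * PowerSeries.mk B = 1 ↔
      ∀ n, ∑ i ∈ range (n + 1), A i * B (n - i) = if n = 0 then 1 else 0 := by
  simp only [PowerSeries.ext_iff, PowerSeries.coeff_mul, PowerSeries.coeff_one,
    PowerSeries.coeff_mk, Finset.Nat.sum_antidiagonal_eq_sum_range_succ fun i j => A i * B j]

/-- Truncated at total degree `n`, the double sum regroups as `∑_{k < n} (A · B)_k c (m - k)`. -/
lemma sum_mul_sum_range_sub_eq {R : Type*} [Semiring R] {A B : ℕ → R}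
    (hAB : PowerSeries.mk A * PowerSeries.mk B = 1) (c : ℤ → R) (m : ℤ) {n : ℕ} (hn : 0 < n) :
    ∑ j ∈ range n, A j * ∑ i ∈ range (n - j), B i * c (m - j - i) = c m := by
  calc ∑ j ∈ range n, A j * ∑ i ∈ range (n - j), B i * c (m - j - i)
      = ∑ k ∈ range n, ∑ j ∈ range (k + 1), A j * (B (k - j) * c (m - j - (k - j : ℕ))) := by
        simp_rw [mul_sum]
        exact (sum_range_diag_flip n _).symm
    _ = ∑ k ∈ range n, (∑ j ∈ range (k + 1), A j * B (k - j)) * c (m - k) := by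
        refine sum_congr rfl fun k _ => ?_
        rw [sum_mul]
        refine sum_congr rfl fun j hj => ?_
        rw [mem_range] at hj
        rw [mul_assoc, Nat.cast_sub (by omega), sub_sub_sub_cancel_right]
    _ = c m := by
        simp [PowerSeries.mk_mul_mk_eq_one_iff.1 hAB, hn]

structure IsERealValuation {L : Type*} [Field L] (v : L → EReal) : Prop where
  map_zero : v 0 = ⊤
  map_one : v 1 = 0
  map_mul : ∀ x y, v (x * y) = v x + v y
  min_le_map_add : ∀ x y, min (v x) (v y) ≤ v (x + y)

namespace IsERealValuation

variable {L : Type*} [Field L] {v : L → EReal} (hv : IsERealValuation v)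
include hv

lemma map_ne_bot (x : L) : v x ≠ ⊥ := by
  rcases eq_or_ne x 0 with rfl | hx
  · simp [hv.map_zero]
  · intro h
    have := hv.map_mul x x⁻¹
    rw [mul_inv_cancel₀ hx, hv.map_one, h, EReal.bot_add] at this
    exact EReal.zero_ne_bot this

lemma map_ne_top {x : L} (hx : x ≠ 0) : v x ≠ ⊤ := by
  intro h
  have := hv.map_mul x x⁻¹
  rw [mul_inv_cancel₀ hx, hv.map_one, h, EReal.top_add_of_ne_bot (hv.map_ne_bot _)] at this
  exact EReal.zero_ne_top this

lemma exists_eq_coe {x : L} (hx : x ≠ 0) : ∃ a : ℝ, v x = a :=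
  ⟨_, (EReal.coe_toReal (hv.map_ne_top hx) (hv.map_ne_bot x)).symm⟩

lemma map_inv {x : L} (hx : x ≠ 0) : v x⁻¹ = -v x := by
  obtain ⟨a, ha⟩ := hv.exists_eq_coe hx
  obtain ⟨b, hb⟩ := hv.exists_eq_coe (inv_ne_zero hx)
  have h := hv.map_mul x x⁻¹
  rw [mul_inv_cancel₀ hx, hv.map_one, ha, hb, ← EReal.coe_add, eq_comm, EReal.coe_eq_zero] at h
  rw [ha, hb, ← EReal.coe_neg, EReal.coe_eq_coe_iff]
  linarith

lemma map_neg (x : L) : v (-x) = v x := by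
  have h : v (-1) = 0 := by
    obtain ⟨a, ha⟩ := hv.exists_eq_coe (neg_ne_zero.2 one_ne_zero)
    have h := hv.map_inv (neg_ne_zero.2 (one_ne_zero (α := L)))
    rw [inv_neg_one, ha, ← EReal.coe_neg, EReal.coe_eq_coe_iff] at h
    rw [ha, EReal.coe_eq_zero]
    linarith
  rw [neg_eq_neg_one_mul, hv.map_mul, h, zero_add]

lemma map_sub_comm (x y : L) : v (x - y) = v (y - x) := by
  rw [← neg_sub, hv.map_neg]

lemma min_le_map_sub (x y : L) : min (v x) (v y) ≤ v (x - y) := by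
  simpa only [sub_eq_add_neg, hv.map_neg] using hv.min_le_map_add x (-y)

lemma le_map_sum {ι : Type*} (s : Finset ι) (f : ι → L) {M : EReal}
    (h : ∀ i ∈ s, M ≤ v (f i)) : M ≤ v (∑ i ∈ s, f i) := by
  induction s using Finset.cons_induction with
  | empty => simp [hv.map_zero]
  | cons i s his ih =>
    rw [sum_cons]
    exact (le_min (h i (mem_cons_self i s)) (ih fun j hj => h j (mem_cons_of_mem hj))).trans
      (hv.min_le_map_add _ _)

lemma le_map_mul {x y : L} {a b : ℝ} (hx : (a : EReal) ≤ v x) (hy : (b : EReal) ≤ v y) :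
    ((a + b : ℝ) : EReal) ≤ v (x * y) := by
  rw [hv.map_mul, EReal.coe_add]
  exact add_le_add hx hy

lemma le_map_mul_of_nonneg_left {x y : L} {M : EReal} (hx : 0 ≤ v x) (hy : M ≤ v y) :
    M ≤ v (x * y) := by
  rw [hv.map_mul]
  simpa using add_le_add hx hy

lemma eq_zero_of_forall_le {x : L} (h : ∀ M : ℝ, (M : EReal) ≤ v x) : x = 0 := by
  by_contra hx
  obtain ⟨a, ha⟩ := hv.exists_eq_coe hx
  have := h (a + 1)
  rw [ha, EReal.coe_le_coe_iff] at this
  linarith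

lemma natCast_nonneg (n : ℕ) : 0 ≤ v n := by
  induction n with
  | zero => simp [hv.map_zero]
  | succ n ih =>
    push_cast
    exact (le_min ih hv.map_one.ge).trans (hv.min_le_map_add _ _)

lemma map_intCast (m : ℤ) : v m = v m.natAbs := by
  rcases Int.natAbs_eq m with h | h <;> rw [h] <;> simp [hv.map_neg]

lemma intCast_nonneg (m : ℤ) : 0 ≤ v m := hv.map_intCast m ▸ hv.natCast_nonneg _

end IsERealValuation

section

variable {L : Type*} [Field L] {v : L → EReal}

lemma hasVSum_iff {f : ℕ → L} {a : L} :
    HasVSum v f a ↔ ∀ M : ℝ, ∀ᶠ n in atTop, (M : EReal) ≤ v (∑ i ∈ range n, f i - a) := by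
  simp only [HasVSum, eventually_atTop, ge_iff_le]

lemma hasVSum_zero (hv : IsERealValuation v) : HasVSum v (fun _ => 0) 0 :=
  fun _ => ⟨0, fun _ _ => by simp [hv.map_zero]⟩

lemma HasVSum.le_map (hv : IsERealValuation v) {f : ℕ → L} {a : L} {M : ℝ} (h : HasVSum v f a)
    (hf : ∀ i, (M : EReal) ≤ v (f i)) : (M : EReal) ≤ v a := by
  obtain ⟨N, hN⟩ := h M
  have hP := hv.le_map_sum (range N) f fun i _ => hf i
  simpa using (le_min hP (hN N le_rfl)).trans (hv.min_le_map_sub _ _)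

lemma HasVSum.unique (hv : IsERealValuation v) {f : ℕ → L} {a b : L} (ha : HasVSum v f a)
    (hb : HasVSum v f b) : a = b := by
  refine sub_eq_zero.1 (hv.eq_zero_of_forall_le fun M => ?_)
  obtain ⟨n, han, hbn⟩ := ((hasVSum_iff.1 ha M).and (hasVSum_iff.1 hb M)).exists
  simpa [hv.map_sub_comm (∑ i ∈ range n, f i) a] using
    (le_min hbn han).trans (hv.min_le_map_sub _ _)

def IsVComplete (v : L → EReal) : Prop :=
  ∀ x : ℕ → L, (∀ M : ℝ, ∃ N : ℕ, ∀ m ≥ N, ∀ k ≥ N, (M : EReal) ≤ v (x m - x k)) →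
    ∃ a : L, ∀ M : ℝ, ∃ N : ℕ, ∀ k ≥ N, (M : EReal) ≤ v (x k - a)

lemma exists_hasVSum (hv : IsERealValuation v) (hL : IsVComplete v) {f : ℕ → L}
    (hf : ∀ M : ℝ, ∀ᶠ i in atTop, (M : EReal) ≤ v (f i)) : ∃ a, HasVSum v f a := by
  refine hL _ fun M => ?_
  obtain ⟨N, hN⟩ := eventually_atTop.1 (hf M)
  refine ⟨N, fun m hm k hk => ?_⟩
  wlog hkm : k ≤ m generalizing m k
  · rw [hv.map_sub_comm]; exact this k hk m hm (by omega)
  rw [← sum_Ico_eq_sub _ hkm]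
  exact hv.le_map_sum _ _ fun i hi => hN i (hk.trans (mem_Ico.1 hi).1)

def IsCauchyProduct (v : L → EReal) (a : ℕ → L) (c b : ℤ → L) : Prop :=
  ∀ n : ℤ, HasVSum v (fun i : ℕ => a i * c (n - i)) (b n)

lemma exists_isCauchyProduct (hv : IsERealValuation v) (hL : IsVComplete v) {a : ℕ → L}
    (ha : ∀ i, 0 ≤ v (a i)) {c : ℤ → L} (hc : ∀ M : ℝ, ∀ᶠ m in atBot, (M : EReal) ≤ v (c m)) :
    ∃ b, IsCauchyProduct v a c b := by
  choose b hb using fun n : ℤ => exists_hasVSum hv hL fun M =>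
    ((tendsto_sub_natCast_atBot n).eventually (hc M)).mono fun i hi =>
      hv.le_map_mul_of_nonneg_left (ha i) hi
  exact ⟨b, hb⟩

lemma IsCauchyProduct.le_map (hv : IsERealValuation v) {a : ℕ → L} (ha : ∀ i, 0 ≤ v (a i))
    {c b : ℤ → L} (hb : IsCauchyProduct v a c b) {n : ℤ} {M : ℝ}
    (hc : ∀ m ≤ n, (M : EReal) ≤ v (c m)) : (M : EReal) ≤ v (b n) :=
  (hb n).le_map hv fun i => hv.le_map_mul_of_nonneg_left (ha i) (hc _ (by omega))

lemma IsCauchyProduct.unique (hv : IsERealValuation v) {a : ℕ → L} {c b b' : ℤ → L}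
    (hb : IsCauchyProduct v a c b) (hb' : IsCauchyProduct v a c b') : b = b' :=
  funext fun n => (hb n).unique hv (hb' n)

lemma isCauchyProduct_zero (hv : IsERealValuation v) (a : ℕ → L) :
    IsCauchyProduct v a (fun _ => 0) (fun _ => 0) := by
  intro n
  simpa only [mul_zero] using hasVSum_zero hv

/-- `A · (B · c) = (A · B) · c`: associativity of the Cauchy product, proved on truncations
using that `c` vanishes towards `-∞`. -/
lemma IsCauchyProduct.cancel (hv : IsERealValuation v) {A B : ℕ → L} (hA : ∀ j, 0 ≤ v (A j))
    (hB : ∀ i, 0 ≤ v (B i)) (hAB : PowerSeries.mk A * PowerSeries.mk B = 1) {c S : ℤ → L}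
    (hc : ∀ M : ℝ, ∀ᶠ m in atBot, (M : EReal) ≤ v (c m)) (hS : IsCauchyProduct v B c S) :
    IsCauchyProduct v A S c := by
  intro m
  rw [hasVSum_iff]
  intro M
  obtain ⟨N, hN⟩ : ∃ N : ℕ, ∀ m' ≤ m - N, (M : EReal) ≤ v (c m') := by
    obtain ⟨a, ha⟩ := eventually_atBot.1 (hc M)
    exact ⟨(m - a).toNat, fun m' hm' => ha m' (by omega)⟩
  have hfar : ∀ j ≥ N, ∀ I, (M : EReal) ≤
      v (S (m - j) - ∑ i ∈ range I, B i * c (m - j - i)) := fun j hj I =>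
    (le_min (hS.le_map hv hB fun m' hm' => hN m' (by omega))
      (hv.le_map_sum _ _ fun i _ => hv.le_map_mul_of_nonneg_left (hB i) (hN _ (by omega)))).trans
      (hv.min_le_map_sub _ _)
  have hnear : ∀ᶠ n in atTop, ∀ j ∈ range N, (M : EReal) ≤
      v (S (m - j) - ∑ i ∈ range (n - j), B i * c (m - j - i)) := by
    rw [eventually_all_finset]
    intro j _
    filter_upwards [(tendsto_sub_atTop_nat j).eventually (hasVSum_iff.1 (hS (m - j)) M)]
      with n hn
    rwa [hv.map_sub_comm]
  filter_upwards [hnear, eventually_gt_atTop 0] with n hnear hn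
  rw [← sum_mul_sum_range_sub_eq hAB c m hn, ← sum_sub_distrib]
  simp_rw [← mul_sub]
  refine hv.le_map_sum _ _ fun j _ => hv.le_map_mul_of_nonneg_left (hA j) ?_
  rcases lt_or_ge j N with hj | hj
  · exact hnear j (mem_range.2 hj)
  · exact hfar j hj _

lemma isRobba_iff {f : ℤ → L} : IsRobba v f ↔ ∃ r : ℝ, 0 < r ∧ ∀ t : ℝ, 0 < t → t ≤ r →
    ∀ M : ℝ, ∀ᶠ n : ℤ in cofinite, ((M - n * t : ℝ) : EReal) ≤ v (f n) := by
  simp only [IsRobba, Int.exists_forall_le_abs_iff, EReal.coe_le_add_coe_iff]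

lemma IsRobba.eventually_atBot {f : ℤ → L} (hf : IsRobba v f) (M : ℝ) :
    ∀ᶠ m in atBot, (M : EReal) ≤ v (f m) := by
  obtain ⟨r, hr, hf⟩ := isRobba_iff.1 hf
  filter_upwards [(hf r hr le_rfl M).filter_mono atBot_le_cofinite,
    eventually_le_atBot 0] with m hm hm0
  have : (m : ℝ) ≤ 0 := by exact_mod_cast hm0
  exact hm.trans' (EReal.coe_le_coe_iff.2 (by nlinarith))

lemma IsRobba.isCauchyProduct (hv : IsERealValuation v) {a : ℕ → L} (ha : ∀ i, 0 ≤ v (a i))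
    {c b : ℤ → L} (hc : IsRobba v c) (hb : IsCauchyProduct v a c b) : IsRobba v b := by
  obtain ⟨r, hr, hc⟩ := isRobba_iff.1 hc
  refine isRobba_iff.2 ⟨r, hr, fun t ht htr M => ?_⟩
  have hcM := hc t ht htr M
  rw [Int.cofinite_eq, eventually_sup]
  constructor
  · obtain ⟨a₀, ha₀⟩ := Filter.eventually_atBot.1 (hcM.filter_mono atBot_le_cofinite)
    refine Filter.eventually_atBot.2 ⟨a₀, fun n hn => hb.le_map hv ha fun m hm => ?_⟩
    have : (m : ℝ) ≤ n := by exact_mod_cast hm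
    exact (ha₀ m (hm.trans hn)).trans' (EReal.coe_le_coe_iff.2 (by nlinarith))
  · obtain ⟨K, hK⟩ :=
      exists_forall_min_le_of_eventually_cofinite (fun m => hv.map_ne_bot (c m)) hcM
    filter_upwards [(tendsto_intCast_atTop_atTop.atTop_mul_const ht).eventually_ge_atTop (M - K)]
      with n hn
    refine hb.le_map hv ha fun m hm => (hK m).trans' (EReal.coe_le_coe_iff.2 ?_)
    have : (m : ℝ) ≤ n := by exact_mod_cast hm
    exact le_min (by linarith) (by nlinarith)

lemma IsRobba.comp_sub_one {x : ℤ → L} (hx : IsRobba v x) : IsRobba v fun m => x (m - 1) := by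
  obtain ⟨r, hr, hx⟩ := isRobba_iff.1 hx
  refine isRobba_iff.2 ⟨r, hr, fun t ht htr M => ?_⟩
  filter_upwards [(sub_left_injective (b := (1 : ℤ))).tendsto_cofinite.eventually
    (hx t ht htr (M - t))] with m hm
  convert hm using 2
  push_cast
  ring

lemma IsERealValuation.eventually_le_map_intCast_inv [CharZero L] (hv : IsERealValuation v)
    {p : ℕ} (hvnat : ∀ n : ℕ, n ≠ 0 → v n = ((padicValNat p n : ℝ) : EReal)) {t : ℝ}
    (ht : 0 < t) : ∀ᶠ m : ℤ in cofinite, ((-(t * |(m : ℝ)|) : ℝ) : EReal) ≤ v (m : L)⁻¹ := by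
  filter_upwards [tendsto_natAbs_cofinite_atTop.eventually ((isLittleO_padicValNat p).bound ht),
    eventually_cofinite_ne 0] with m hm hm0
  rw [hv.map_inv (Int.cast_ne_zero.2 hm0), hv.map_intCast, hvnat _ (Int.natAbs_ne_zero.2 hm0),
    ← EReal.coe_neg, EReal.coe_le_coe_iff, neg_le_neg_iff]
  simpa [Nat.cast_natAbs] using hm

/-- Since `v (m⁻¹) = -v_p(m) = o(|m|)`, halving `t` absorbs it as `m → +∞` and doubling `t`
as `m → -∞`; hence the radius halves. -/
lemma IsRobba.intCast_inv_mul [CharZero L] (hv : IsERealValuation v) {p : ℕ}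
    (hvnat : ∀ n : ℕ, n ≠ 0 → v n = ((padicValNat p n : ℝ) : EReal)) {x : ℤ → L}
    (hx : IsRobba v x) : IsRobba v fun m => (m : L)⁻¹ * x m := by
  obtain ⟨r, hr, hx⟩ := isRobba_iff.1 hx
  refine isRobba_iff.2 ⟨r / 2, by positivity, fun t ht htr M => ?_⟩
  filter_upwards [hv.eventually_le_map_intCast_inv hvnat (half_pos ht),
    hx (t / 2) (by positivity) (by linarith) M, hx (2 * t) (by positivity) (by linarith) M]
    with m hinv hpos hneg
  rcases le_or_gt 0 (m : ℝ) with hm | hm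
  · refine (hv.le_map_mul hinv hpos).trans' (EReal.coe_le_coe_iff.2 ?_)
    rw [abs_of_nonneg hm]
    linarith
  · refine (hv.le_map_mul hinv hneg).trans' (EReal.coe_le_coe_iff.2 ?_)
    rw [abs_of_neg hm]
    nlinarith

def derivCoeff (f : ℤ → L) (n : ℤ) : L := ((n + 1 : ℤ) : L) * f (n + 1)

lemma isDer_iff {a : ℕ → L} {f b : ℤ → L} :
    IsDer v a f b ↔ IsCauchyProduct v a (derivCoeff f) b := Iff.rfl

lemma derivCoeff_eq_zero_iff [CharZero L] {f : ℤ → L} :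
    derivCoeff f = (fun _ => 0) ↔ ∃ c, f = fun n => if n = 0 then c else 0 := by
  constructor
  · intro h
    refine ⟨f 0, funext fun n => ?_⟩
    split_ifs with hn
    · rw [hn]
    · have := congrFun h (n - 1)
      simp only [derivCoeff, sub_add_cancel, mul_eq_zero, Int.cast_eq_zero] at this
      exact this.resolve_left hn
  · rintro ⟨c, rfl⟩
    funext n
    simp only [derivCoeff]
    split_ifs with h <;> simp [h]

lemma derivCoeff_intCast_inv_mul [CharZero L] {b : ℤ → L} (hb : b (-1) = 0) :
    derivCoeff (fun m => (m : L)⁻¹ * b (m - 1)) = b := by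
  funext n
  show ((n + 1 : ℤ) : L) * (((n + 1 : ℤ) : L)⁻¹ * b (n + 1 - 1)) = b n
  rw [add_sub_cancel_right]
  rcases eq_or_ne (n + 1) 0 with h | h
  · rw [show n = -1 by omega, hb, mul_zero, mul_zero]
  · rw [← mul_assoc, mul_inv_cancel₀ (Int.cast_ne_zero.2 h), one_mul]

lemma eventually_atBot_derivCoeff (hv : IsERealValuation v) {f : ℤ → L}
    (hf : ∀ M : ℝ, ∀ᶠ m in atBot, (M : EReal) ≤ v (f m)) (M : ℝ) :
    ∀ᶠ m in atBot, (M : EReal) ≤ v (derivCoeff f m) :=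
  ((tendsto_atBot_add_const_right _ 1 tendsto_id).eventually (hf M)).mono fun _ hm =>
    hv.le_map_mul_of_nonneg_left (hv.intCast_nonneg _) hm

end

theorem stmt_12_general
    (L : Type*) [Field L] [CharZero L]
    (p : ℕ)
    (v : L → EReal)
    (hv0 : v 0 = ⊤) (hv1 : v 1 = 0)
    (hvmul : ∀ x y : L, v (x * y) = v x + v y)
    (hvadd : ∀ x y : L, min (v x) (v y) ≤ v (x + y))
    (hvnat : ∀ n : ℕ, n ≠ 0 → v ((n : L)) = ((padicValNat p n : ℝ) : EReal))
    (hcomplete : ∀ x : ℕ → L,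
      (∀ M : ℝ, ∃ N : ℕ, ∀ m ≥ N, ∀ k ≥ N, (M : EReal) ≤ v (x m - x k)) →
      ∃ a : L, ∀ M : ℝ, ∃ N : ℕ, ∀ k ≥ N, (M : EReal) ≤ v (x k - a))
    (gder gderInv : ℕ → L)
    (hgd0 : gder 0 = 1)
    (hgdO : ∀ n : ℕ, (0 : EReal) ≤ v (gder n))
    (hgdiO : ∀ n : ℕ, (0 : EReal) ≤ v (gderInv n))
    (hconv : ∀ n : ℕ,
      ∑ i ∈ Finset.range (n + 1), gder i * gderInv (n - i) = if n = 0 then 1 else 0) :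
    -- (1) the kernel of ∂ is exactly the constants
    (∀ f : ℤ → L, IsRobba v f →
      (IsDer v gderInv f (fun _ => 0) ↔
        ∃ cc : L, f = fun n : ℤ => if n = 0 then cc else 0)) ∧
    -- (2) the image of ∂ equals the kernel of Res
    (∀ f : ℤ → L, IsRobba v f →
      ((∃ h : ℤ → L, IsRobba v h ∧ IsDer v gderInv h f) ↔ HasRes v gder f 0)) ∧
    -- (3) Res is surjective
    (∀ ρ : L, ∃ f : ℤ → L, IsRobba v f ∧ HasRes v gder f ρ) := by
  have hv : IsERealValuation v := ⟨hv0, hv1, hvmul, hvadd⟩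
  have hmul : PowerSeries.mk gder * PowerSeries.mk gderInv = 1 :=
    PowerSeries.mk_mul_mk_eq_one_iff.2 hconv
  refine ⟨fun f hf => ?_, fun f hf => ⟨?_, fun hres => ?_⟩, fun ρ => ?_⟩
  · rw [isDer_iff, ← derivCoeff_eq_zero_iff]
    refine ⟨fun hder => ?_, fun h => by rw [h]; exact isCauchyProduct_zero hv _⟩
    exact ((isCauchyProduct_zero hv gder).unique hv (hder.cancel hv hgdO hgdiO hmul
      (eventually_atBot_derivCoeff hv hf.eventually_atBot))).symm
  · rintro ⟨h, hh, hder⟩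
    have hprod := (isDer_iff.1 hder).cancel hv hgdO hgdiO hmul
      (eventually_atBot_derivCoeff hv hh.eventually_atBot)
    simpa [derivCoeff, HasRes] using hprod (-1)
  · obtain ⟨b, hb⟩ := exists_isCauchyProduct hv hcomplete hgdO hf.eventually_atBot
    refine ⟨fun m => (m : L)⁻¹ * b (m - 1),
      (hf.isCauchyProduct hv hgdO hb).comp_sub_one.intCast_inv_mul hv hvnat, ?_⟩
    rw [isDer_iff, derivCoeff_intCast_inv_mul ((hb (-1)).unique hv hres)]
    exact hb.cancel hv hgdiO hgdO (mul_comm (PowerSeries.mk gder) _ ▸ hmul) hf.eventually_atBot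
  · refine ⟨fun n => if n = -1 then ρ else 0, isRobba_iff.2 ⟨1, one_pos, fun t _ _ M =>
      (eventually_cofinite_ne (-1)).mono fun n hn => by simp [hn, hv0]⟩,
      fun M => ⟨1, fun n hn => ?_⟩⟩
    rw [sum_eq_single_of_mem 0 (mem_range.2 hn) fun i _ hi => by simp [hi]]
    simp [hgd0, hv0]

/-- Let `L` be a (complete, characteristic-zero) field with a valuation `v`
extending the `p`-adic valuation (`v p = 1` on `ℕ`), and let `g'`, `(g')⁻¹ ∈ 1 + u O_L[[u]]` be
the derivative of the Lubin–Tate logarithm and its inverse (mutually inverse power series with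
integral coefficients and constant term `1`).  Then the sequence
`0 → L → R_L --∂--> R_L --Res--> L → 0` is exact:
(1) the kernel of `∂` on `R_L` is exactly the constants;
(2) `f ∈ R_L` is of the form `∂ h`, `h ∈ R_L`, iff `Res f = 0`;
(3) `Res : R_L → L` is surjective. -/
theorem stmt_12
    (L : Type*) [Field L] [CharZero L]
    (p : ℕ) (hp : p.Prime)
    (v : L → EReal)
    (hv0 : v 0 = ⊤) (hv1 : v 1 = 0)
    (hvmul : ∀ x y : L, v (x * y) = v x + v y)
    (hvadd : ∀ x y : L, min (v x) (v y) ≤ v (x + y))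
    (hvnat : ∀ n : ℕ, n ≠ 0 → v ((n : L)) = ((padicValNat p n : ℝ) : EReal))
    (hcomplete : ∀ x : ℕ → L,
      (∀ M : ℝ, ∃ N : ℕ, ∀ m ≥ N, ∀ k ≥ N, (M : EReal) ≤ v (x m - x k)) →
      ∃ a : L, ∀ M : ℝ, ∃ N : ℕ, ∀ k ≥ N, (M : EReal) ≤ v (x k - a))
    (gder gderInv : ℕ → L)
    (hgd0 : gder 0 = 1) (hgdi0 : gderInv 0 = 1)
    (hgdO : ∀ n : ℕ, (0 : EReal) ≤ v (gder n))
    (hgdiO : ∀ n : ℕ, (0 : EReal) ≤ v (gderInv n))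
    (hconv : ∀ n : ℕ,
      ∑ i ∈ Finset.range (n + 1), gder i * gderInv (n - i) = if n = 0 then 1 else 0) :
    -- (1) the kernel of ∂ is exactly the constants
    (∀ f : ℤ → L, IsRobba v f →
      (IsDer v gderInv f (fun _ => 0) ↔
        ∃ cc : L, f = fun n : ℤ => if n = 0 then cc else 0)) ∧
    -- (2) the image of ∂ equals the kernel of Res
    (∀ f : ℤ → L, IsRobba v f →
      ((∃ h : ℤ → L, IsRobba v h ∧ IsDer v gderInv h f) ↔ HasRes v gder f 0)) ∧
    -- (3) Res is surjective
    (∀ ρ : L, ∃ f : ℤ → L, IsRobba v f ∧ HasRes v gder f ρ) :=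
  stmt_12_general L p v hv0 hv1 hvmul hvadd hvnat hcomplete gder gderInv hgd0 hgdO hgdiO hconv
end

section
/- Write the Lubin–Tate logarithm as g = ∑_{n≥1} c_n·X^n (so c_1 = 1). Then: (1) v_π(c_n) ≥ −N whenever n ≤ q^N; (2) v_π(c_{q^N}) = −N for every natural number N. In particular inf_n v_p(c_n) = −∞, so the coefficients of g are unbounded; hence g converges on the open unit disc but does not have bounded coefficients (g lies in the Robba ring R_F but not in the ring E^†_F of overconvergent series with bounded coefficients). -/
open Polynomial Finset

/-!
Comparing coefficients of `X ^ n` in `g (X ^ q + π X) = π g (X)` gives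
`(π - π ^ n) c n = ∑_{m < n} c m a(m, n)`, where `a(m, n)`, the `n`-th coefficient of
`(X ^ q + π X) ^ m`, is a sum of terms `binom(m, i) π ^ j` over `i + j = m`, `q i + j = n`.
Since `v (π - π ^ n) = 1` for `n ≥ 2`, we get `1 + v (c n) ≥ min (v (c m) + j)`.

For `n ≤ q ^ N` this gives `v (c n) ≥ -N` by induction on `n`: a term with `m > q ^ (N - 1)`
has `j ≥ 1`, as `j = 0` would force `n = q m > q ^ N`.
For `n = q ^ (N + 1)` the term `m = q ^ N`, `j = 0` equals `c (q ^ N)`, and every other term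
has `j ≥ 2` (`j = 1` would make `q` divide `1`), so it dominates strictly and
`v (c (q ^ (N + 1))) = v (c (q ^ N)) - 1`.
-/

/-- Mathlib's `AddValuation` needs a `LinearOrderedAddCommMonoidWithTop`, which `EReal` is not
(`⊥ + ⊤ = ⊥`), so the valuation axioms are bundled by hand. -/
structure IsEValuation {R : Type*} [Ring R] (v : R → EReal) : Prop where
  map_zero : v 0 = ⊤
  map_one : v 1 = 0
  map_mul : ∀ x y, v (x * y) = v x + v y
  min_le_map_add : ∀ x y, min (v x) (v y) ≤ v (x + y)

theorem EReal.eq_zero_of_add_self_eq_zero {a : EReal} (h : a + a = 0) : a = 0 := by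
  induction a using EReal.rec with
  | bot => simp at h
  | coe r => norm_cast at h ⊢; linarith
  | top => simp at h

theorem EReal.coe_le_add_natCast_of_le {a b : ℝ} {x : EReal} {j : ℕ} (hx : (a : EReal) ≤ x)
    (hb : b ≤ a + j) : (b : EReal) ≤ x + j :=
  calc (b : EReal) ≤ ((a + j : ℝ) : EReal) := EReal.coe_le_coe_iff.mpr hb
    _ = (a : EReal) + j := by rw [EReal.coe_add, EReal.coe_natCast]
    _ ≤ x + j := add_le_add_left hx _

namespace IsEValuation

section Ring

variable {R : Type*} [Ring R] {v : R → EReal}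

theorem map_neg_one (hv : IsEValuation v) : v (-1) = 0 :=
  EReal.eq_zero_of_add_self_eq_zero <| by rw [← hv.map_mul, neg_one_mul, neg_neg, hv.map_one]

theorem map_neg (hv : IsEValuation v) (x : R) : v (-x) = v x := by
  rw [neg_eq_neg_one_mul, hv.map_mul, hv.map_neg_one, zero_add]

theorem map_add_eq_of_lt (hv : IsEValuation v) {x y : R} (h : v x < v y) : v (x + y) = v x := by
  refine le_antisymm ?_ (min_eq_left h.le ▸ hv.min_le_map_add x y)
  have h' := hv.min_le_map_add (x + y) (-y)
  rw [add_neg_cancel_right, hv.map_neg] at h'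
  exact (min_le_iff.mp h').resolve_right h.not_ge

theorem le_map_sum (hv : IsEValuation v) {ι : Type*} {s : Finset ι} {f : ι → R} {b : EReal}
    (h : ∀ i ∈ s, b ≤ v (f i)) : b ≤ v (∑ i ∈ s, f i) :=
  Finset.sum_induction f (fun x => b ≤ v x)
    (fun _ _ hx hy => (le_min hx hy).trans (hv.min_le_map_add _ _))
    (hv.map_zero ▸ le_top) h

theorem map_natCast_nonneg (hv : IsEValuation v) (n : ℕ) : 0 ≤ v n := by
  induction n with
  | zero => simp [hv.map_zero]
  | succ n ih =>
    rw [Nat.cast_succ]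
    exact (le_min ih hv.map_one.ge).trans (hv.min_le_map_add _ _)

theorem map_pow_of_eq_one (hv : IsEValuation v) {π : R} (hπ : v π = 1) (n : ℕ) :
    v (π ^ n) = n := by
  induction n with
  | zero => rw [pow_zero, hv.map_one, Nat.cast_zero]
  | succ n ih => rw [pow_succ, hv.map_mul, ih, hπ, Nat.cast_succ]

theorem map_sub_pow (hv : IsEValuation v) {π : R} (hπ : v π = 1) {n : ℕ} (hn : 2 ≤ n) :
    v (π - π ^ n) = 1 := by
  have hlt : v π < v (-π ^ n) := by
    rw [hv.map_neg, hv.map_pow_of_eq_one hπ, hπ]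
    exact_mod_cast hn
  rw [sub_eq_add_neg, hv.map_add_eq_of_lt hlt, hπ]

end Ring

end IsEValuation

section Coefficients

variable {R : Type*} [CommRing R] (π : R) {q : ℕ}

theorem coeff_pow_X_pow_add_C_mul_X (m n : ℕ) :
    ((X ^ q + C π * X) ^ m).coeff n =
      ∑ ij ∈ antidiagonal m with q * ij.1 + ij.2 = n, (m.choose ij.1 : R) * π ^ ij.2 := by
  rw [(Commute.all _ _).add_pow', finsetSum_coeff, sum_filter]
  refine sum_congr rfl fun ij _ => ?_
  rw [mul_pow, ← C_pow, ← pow_mul, nsmul_eq_mul, ← C_eq_natCast,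
    show C (m.choose ij.1 : R) * (X ^ (q * ij.1) * (C (π ^ ij.2) * X ^ ij.2))
      = C ((m.choose ij.1 : R) * π ^ ij.2) * X ^ (q * ij.1 + ij.2) by
        rw [C_mul, pow_add]; ring,
    coeff_C_mul_X_pow]
  exact if_congr eq_comm rfl rfl

theorem filter_antidiagonal_mul_add_eq_singleton (hq : q ≠ 1) (i j : ℕ) :
    {ij ∈ antidiagonal (i + j) | q * ij.1 + ij.2 = q * i + j} = {(i, j)} := by
  ext ⟨a, b⟩
  simp only [mem_filter, HasAntidiagonal.mem_antidiagonal, mem_singleton, Prod.mk.injEq]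
  refine ⟨fun ⟨hsum, hweight⟩ => ?_, fun ⟨rfl, rfl⟩ => ⟨rfl, rfl⟩⟩
  have hq' : (q : ℤ) - 1 ≠ 0 := sub_ne_zero.mpr (by exact_mod_cast hq)
  have ha : ((q : ℤ) - 1) * a = ((q : ℤ) - 1) * i := by
    zify at hsum hweight
    linear_combination hweight - hsum
  have ha' : a = i := by exact_mod_cast mul_left_cancel₀ hq' ha
  exact ⟨ha', by omega⟩

theorem coeff_pow_X_pow_add_C_mul_X_self (hq : q ≠ 1) (n : ℕ) :
    ((X ^ q + C π * X) ^ n).coeff n = π ^ n := by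
  have h := filter_antidiagonal_mul_add_eq_singleton hq 0 n
  rw [mul_zero, zero_add] at h
  rw [coeff_pow_X_pow_add_C_mul_X, h, sum_singleton, Nat.choose_zero_right, Nat.cast_one, one_mul]

theorem coeff_pow_X_pow_add_C_mul_X_pow_succ (hq : q ≠ 1) (N : ℕ) :
    ((X ^ q + C π * X) ^ (q ^ N)).coeff (q ^ (N + 1)) = 1 := by
  have h := filter_antidiagonal_mul_add_eq_singleton hq (q ^ N) 0
  rw [add_zero, add_zero, ← pow_succ'] at h
  rw [coeff_pow_X_pow_add_C_mul_X, h, sum_singleton, Nat.choose_self, Nat.cast_one, pow_zero,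
    one_mul]

end Coefficients

section LubinTateLog

variable {R : Type*} [CommRing R] {v : R → EReal} {π : R} {q : ℕ} {c : ℕ → R}

theorem IsEValuation.le_map_mul_coeff (hv : IsEValuation v) (hπ : v π = 1) {x : R} {b : EReal}
    {m n : ℕ} (h : ∀ i j, i + j = m → q * i + j = n → b ≤ v x + j) :
    b ≤ v (x * ((X ^ q + C π * X) ^ m).coeff n) := by
  rw [coeff_pow_X_pow_add_C_mul_X, mul_sum]
  refine hv.le_map_sum fun ij hij => ?_
  rw [mem_filter, HasAntidiagonal.mem_antidiagonal] at hij
  calc b ≤ v x + ij.2 := h _ _ hij.1 hij.2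
    _ ≤ v x + ij.2 + v (m.choose ij.1 : R) := le_add_of_nonneg_right (hv.map_natCast_nonneg _)
    _ = v (x * ((m.choose ij.1 : R) * π ^ ij.2)) := by
      rw [mul_comm (m.choose ij.1 : R), ← mul_assoc, hv.map_mul, hv.map_mul,
        hv.map_pow_of_eq_one hπ]

theorem sub_pow_mul_eq_sum (hq : q ≠ 1)
    (hc : ∀ n, π * c n = ∑ m ∈ range (n + 1), c m * ((X ^ q + C π * X) ^ m).coeff n)
    (n : ℕ) :
    (π - π ^ n) * c n = ∑ m ∈ range n, c m * ((X ^ q + C π * X) ^ m).coeff n := by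
  have h := hc n
  rw [sum_range_succ, coeff_pow_X_pow_add_C_mul_X_self π hq] at h
  linear_combination h

theorem IsEValuation.one_add_map_eq_map_sum (hv : IsEValuation v) (hπ : v π = 1) (hq : q ≠ 1)
    (hc : ∀ n, π * c n = ∑ m ∈ range (n + 1), c m * ((X ^ q + C π * X) ^ m).coeff n)
    {n : ℕ} (hn : 2 ≤ n) :
    1 + v (c n) = v (∑ m ∈ range n, c m * ((X ^ q + C π * X) ^ m).coeff n) := by
  rw [← hv.map_sub_pow hπ hn, ← hv.map_mul, sub_pow_mul_eq_sum hq hc]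

theorem IsEValuation.neg_le_map_of_le_pow (hv : IsEValuation v) (hπ : v π = 1) (hq : 2 ≤ q)
    (hc0 : c 0 = 0) (hc1 : c 1 = 1)
    (hc : ∀ n, π * c n = ∑ m ∈ range (n + 1), c m * ((X ^ q + C π * X) ^ m).coeff n)
    (N n : ℕ) (hn : n ≤ q ^ N) : ((-(N : ℝ) : ℝ) : EReal) ≤ v (c n) := by
  induction n using Nat.strong_induction_on generalizing N with
  | _ n ih =>
  obtain hn1 | hn2 := lt_or_ge n 2
  · interval_cases n
    · simp [hc0, hv.map_zero]
    · rw [hc1, hv.map_one]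
      exact_mod_cast neg_nonpos.mpr N.cast_nonneg
  obtain ⟨M, rfl⟩ : ∃ M, N = M + 1 :=
    Nat.exists_eq_succ_of_ne_zero fun hN => by rw [hN, pow_zero] at hn; omega
  have hS : ((-(M : ℝ) : ℝ) : EReal) ≤
      v (∑ m ∈ range n, c m * ((X ^ q + C π * X) ^ m).coeff n) := by
    refine hv.le_map_sum fun m hm => hv.le_map_mul_coeff hπ fun i j hij hweight => ?_
    have hmn := mem_range.mp hm
    by_cases hmM : m ≤ q ^ M
    · exact EReal.coe_le_add_natCast_of_le (ih m hmn M hmM) (by simp)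
    · have hj : 1 ≤ j := by
        by_contra! hj0
        obtain rfl : j = 0 := by omega
        rw [add_zero] at hij hweight
        subst hij
        have hqi : q * i ≤ q * q ^ M := by rw [← pow_succ']; omega
        exact hmM (Nat.le_of_mul_le_mul_left hqi (by omega))
      refine EReal.coe_le_add_natCast_of_le (ih m hmn (M + 1) (by omega)) ?_
      push_cast
      linarith [show (1 : ℝ) ≤ j by exact_mod_cast hj]
  rw [← (EReal.addLECancellable_coe 1).add_le_add_iff_left, EReal.coe_one,
    hv.one_add_map_eq_map_sum hπ (by omega) hc hn2, ← EReal.coe_one, ← EReal.coe_add]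
  convert hS using 2
  push_cast
  ring

theorem IsEValuation.map_coeff_pow (hv : IsEValuation v) (hπ : v π = 1) (hq : 2 ≤ q)
    (hc0 : c 0 = 0) (hc1 : c 1 = 1)
    (hc : ∀ n, π * c n = ∑ m ∈ range (n + 1), c m * ((X ^ q + C π * X) ^ m).coeff n)
    (N : ℕ) : v (c (q ^ N)) = ((-(N : ℝ) : ℝ) : EReal) := by
  induction N with
  | zero => simp [hc1, hv.map_one]
  | succ N ih =>
  have hlt : q ^ N < q ^ (N + 1) := Nat.pow_lt_pow_succ (by omega)
  have hrest : (((1 - N : ℝ) : ℝ) : EReal) ≤ v (∑ m ∈ (range (q ^ (N + 1))).erase (q ^ N),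
      c m * ((X ^ q + C π * X) ^ m).coeff (q ^ (N + 1))) := by
    refine hv.le_map_sum fun m hm => hv.le_map_mul_coeff hπ fun i j hij hweight => ?_
    obtain ⟨hmN, hm⟩ := mem_erase.mp hm
    have hj : 2 ≤ j := by
      by_contra! hj
      interval_cases j
      · rw [add_zero] at hij hweight
        rw [pow_succ'] at hweight
        subst hij
        exact hmN (Nat.eq_of_mul_eq_mul_left (by omega) hweight)
      · have hdvd : q ∣ 1 := (Nat.dvd_add_right (dvd_mul_right q i)).mp
          (hweight ▸ dvd_pow_self q N.succ_ne_zero)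
        exact absurd (Nat.le_of_dvd one_pos hdvd) (by omega)
    refine EReal.coe_le_add_natCast_of_le
      (hv.neg_le_map_of_le_pow hπ hq hc0 hc1 hc (N + 1) m (mem_range.mp hm).le) ?_
    push_cast
    linarith [show (2 : ℝ) ≤ j by exact_mod_cast hj]
  have hS : v (∑ m ∈ range (q ^ (N + 1)), c m * ((X ^ q + C π * X) ^ m).coeff (q ^ (N + 1)))
      = ((-(N : ℝ) : ℝ) : EReal) := by
    have hdom : v (c (q ^ N)) < v (∑ m ∈ (range (q ^ (N + 1))).erase (q ^ N),
        c m * ((X ^ q + C π * X) ^ m).coeff (q ^ (N + 1))) :=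
      ih ▸ (EReal.coe_lt_coe_iff.mpr (by linarith)).trans_le hrest
    rw [← add_sum_erase _ _ (mem_range.mpr hlt),
      coeff_pow_X_pow_add_C_mul_X_pow_succ π (by omega), mul_one, hv.map_add_eq_of_lt hdom, ih]
  have hn : 2 ≤ q ^ (N + 1) := hq.trans (Nat.le_self_pow N.succ_ne_zero q)
  rw [← (EReal.addLECancellable_coe 1).inj, EReal.coe_one,
    hv.one_add_map_eq_map_sum hπ (by omega) hc hn, hS, ← EReal.coe_one, ← EReal.coe_add]
  congr 1
  push_cast
  ring

end LubinTateLog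

/-- Write the Lubin–Tate logarithm of the special Lubin–Tate group as
`g = ∑_{n≥1} c n · X^n` (so `c 1 = 1`; it is characterized by `c 0 = 0`, `c 1 = 1` and
`g(X^q + π X) = π g(X)`), over the base field `F` with valuation `v_π` normalized by
`v_π π = 1`.  Then:
(1) `v_π (c n) ≥ -N` whenever `n ≤ q^N`;
(2) `v_π (c (q^N)) = -N` for every `N`;
(3) in particular `inf_n v_π (c n) = -∞`, i.e. the coefficients of `g` are unbounded. -/
theorem stmt_15
    (F : Type*) [Field F]
    (vπ : F → EReal)
    (hv0 : vπ 0 = ⊤) (hv1 : vπ 1 = 0)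
    (hvmul : ∀ x y : F, vπ (x * y) = vπ x + vπ y)
    (hvadd : ∀ x y : F, min (vπ x) (vπ y) ≤ vπ (x + y))
    (π : F) (q : ℕ) (hq : 2 ≤ q) (hπ : vπ π = 1)
    (c : ℕ → F) (hc0 : c 0 = 0) (hc1 : c 1 = 1)
    (hceq : ∀ n : ℕ, π * c n =
      ∑ m ∈ Finset.range (n + 1),
        c m * (((Polynomial.X : Polynomial F) ^ q + Polynomial.C π * Polynomial.X) ^ m).coeff n) :
    (∀ N n : ℕ, n ≤ q ^ N → ((-(N : ℝ) : ℝ) : EReal) ≤ vπ (c n)) ∧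
    (∀ N : ℕ, vπ (c (q ^ N)) = ((-(N : ℝ) : ℝ) : EReal)) ∧
    (∀ M : ℝ, ∃ n : ℕ, vπ (c n) < (M : EReal)) := by
  have hv : IsEValuation vπ := ⟨hv0, hv1, hvmul, hvadd⟩
  have hpow := hv.map_coeff_pow hπ hq hc0 hc1 hceq
  refine ⟨hv.neg_le_map_of_le_pow hπ hq hc0 hc1 hceq, hpow, fun M => ?_⟩
  obtain ⟨N, hN⟩ := exists_nat_gt (-M)
  exact ⟨q ^ N, hpow N ▸ EReal.coe_lt_coe_iff.mpr (by linarith)⟩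
end

section
/- Let L be a field containing F complete with respect to a valuation extending v_p. (i) For every a ∈ O_F^×, every f ∈ L[[u]], and all 0 < s ≤ r: v^{[s,r]}(f∘[a]) = v^{[s,r]}(f). (ii) For all 0 < s ≤ r there exists a natural number N such that for every a ∈ 1 + π^N·O_F and every f ∈ L[[u]]: v^{[s,r]}(f∘[a] − f) ≥ v^{[s,r]}(f) + 1. -/
/-!
Write `v^{t}(f) = inf_n (v(f_n) + n t)` for the Gauss valuation. It is ultrametric and
super-multiplicative, and `v^{t}(g) ≥ t` for integral `g` without constant term, so
`v^{t}(f ∘ g) ≥ v^{t}(f)` for `t ≥ 0`. When moreover `v(g'(0)) = 0`, the matrix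
`(coeff_n (g^m))` is triangular with unit diagonal entries `g'(0)^m`, so the inequality can be
inverted, which gives (i).

For (ii) put `h = [a] - X` and `ε = v(π)`. Comparing coefficients in
`h ∘ [π] - π h = [a]^q - X^q` and using `v(π - π^k) = ε` for `k ≥ 2` gives, by induction on `k`,
`v^{ε}(h) ≥ v(a - 1) + ε`. Combined with integrality this yields `v^{t}(h) ≥ 1 + t` for all
`t ≥ s` as soon as `v(a - 1) ≥ 1 + N ε` with `N s ≥ 1`. Finally
`[a]^m - X^m = h · ∑ [a]^i X^(m-1-i)` has `v^{t} ≥ 1 + m t`, and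
`f ∘ [a] - f = ∑ f_m ([a]^m - X^m)`.
-/

/-- Formal composition `f ∘ s` of power series (intended for `s` with zero constant term). -/
noncomputable def pscomp {L : Type*} [CommRing L] (f s : PowerSeries L) : PowerSeries L :=
  PowerSeries.mk fun n =>
    ∑ m ∈ Finset.range (n + 1), PowerSeries.coeff m f * PowerSeries.coeff n (s ^ m)

open PowerSeries Finset

structure IsAddVal {R : Type*} [CommRing R] (v : R → EReal) : Prop where
  map_zero : v 0 = ⊤
  map_one : v 1 = 0
  map_mul (x y : R) : v (x * y) = v x + v y
  min_le_map_add (x y : R) : min (v x) (v y) ≤ v (x + y)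

/-- The paper's `v^{{t}}`. -/
noncomputable def gaussVal {R : Type*} [CommRing R] (v : R → EReal) (t : ℝ) (f : R⟦X⟧) : EReal :=
  ⨅ n : ℕ, v (coeff n f) + ((n * t : ℝ) : EReal)

/-- `∑ₘ fₘ Gₘ`, with the `n`-th coefficient truncated at `m ≤ n`; this is the honest sum when
`Gₘ` has order at least `m`, and `pscomp f g = evalSeq f (g ^ ·)`. -/
noncomputable def evalSeq {R : Type*} [CommRing R] (f : R⟦X⟧) (G : ℕ → R⟦X⟧) : R⟦X⟧ :=
  mk fun n => ∑ m ∈ range (n + 1), coeff m f * coeff n (G m)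

section Algebra

variable {R : Type*} [CommRing R]

lemma pscomp_eq_evalSeq (f g : R⟦X⟧) : pscomp f g = evalSeq f (g ^ ·) := rfl

lemma pscomp_sub_self (f g : R⟦X⟧) :
    pscomp f g - f = evalSeq f (fun m => g ^ m - X ^ m) := by
  ext n
  simp [pscomp, evalSeq, mul_sub, sum_sub_distrib, coeff_X_pow]

lemma pscomp_sub (f g P : R⟦X⟧) : pscomp (f - g) P = pscomp f P - pscomp g P := by
  ext n
  simp [pscomp, sub_mul, sum_sub_distrib]

lemma pscomp_X {P : R⟦X⟧} (hP : coeff 0 P = 0) : pscomp X P = P := by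
  ext n
  rcases n.eq_zero_or_pos with rfl | hn
  · simp [pscomp, hP]
  · simp [pscomp, coeff_X, hn]

lemma coeff_pow_self {g : R⟦X⟧} (hg : coeff 0 g = 0) (n : ℕ) :
    coeff n (g ^ n) = coeff 1 g ^ n := by
  obtain ⟨g', rfl⟩ : X ∣ g := X_dvd_iff.2 (by rwa [← coeff_zero_eq_constantCoeff_apply])
  simpa [mul_pow] using coeff_X_pow_mul (g' ^ n) n 0

lemma coeff_zero_geom_sum₂ {q : ℕ} (hq : 2 ≤ q) {g : R⟦X⟧} (hg0 : coeff 0 g = 0) :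
    coeff 0 (∑ i ∈ range q, g ^ i * X ^ (q - 1 - i)) = 0 := by
  refine (map_sum _ _ _).trans (sum_eq_zero fun i hi => ?_)
  rw [coeff_zero_eq_constantCoeff_apply, map_mul, map_pow, map_pow, constantCoeff_X,
    ← coeff_zero_eq_constantCoeff_apply, hg0, ← pow_add]
  exact zero_pow (by have := mem_range.1 hi; omega)

/-- Coefficient `k` of `(g - X) ∘ P = (g ^ q - X ^ q) + π (g - X)` for `P = X ^ q + π X`, with the
term `m = k` of the composition moved to the left. -/
lemma coeff_sub_X_mul_sub_pow {π : R} {q : ℕ} (hq : 2 ≤ q) {g : R⟦X⟧}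
    (hcomp : pscomp g (X ^ q + C π * X) = g ^ q + C π * g) (k : ℕ) :
    coeff k (g - X) * (π - π ^ k) =
      ∑ m ∈ range k, coeff m (g - X) * coeff k ((X ^ q + C π * X) ^ m)
        - coeff k ((∑ i ∈ range q, g ^ i * X ^ (q - 1 - i)) * (g - X)) := by
  set P : R⟦X⟧ := X ^ q + C π * X
  have hP0 : coeff 0 P = 0 := by simp [P, zero_pow (show q ≠ 0 by omega)]
  have hP1 : coeff 1 P = π := by simp [P, coeff_X_pow, show 1 ≠ q by omega]
  have hfe : pscomp (g - X) P =
      (∑ i ∈ range q, g ^ i * X ^ (q - 1 - i)) * (g - X) + C π * (g - X) := by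
    rw [pscomp_sub, pscomp_X hP0, hcomp, geom_sum₂_mul]; ring
  have hk := congrArg (coeff k) hfe
  rw [pscomp, coeff_mk, sum_range_succ, coeff_pow_self hP0, hP1, map_add, coeff_C_mul] at hk
  linear_combination -hk

end Algebra

section GaussVal

variable {R : Type*} [CommRing R] {v : R → EReal} {t : ℝ} {f g : R⟦X⟧}

lemma le_gaussVal_iff {c : EReal} :
    c ≤ gaussVal v t f ↔ ∀ n : ℕ, c ≤ v (coeff n f) + ((n * t : ℝ) : EReal) :=
  le_iInf_iff

lemma gaussVal_le (n : ℕ) : gaussVal v t f ≤ v (coeff n f) + ((n * t : ℝ) : EReal) :=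
  iInf_le _ n

lemma le_gaussVal_zero_iff {c : EReal} : c ≤ gaussVal v 0 f ↔ ∀ n : ℕ, c ≤ v (coeff n f) := by
  simp [le_gaussVal_iff]

end GaussVal

namespace IsAddVal

variable {R : Type*} [CommRing R] {v : R → EReal} {t : ℝ} {f g : R⟦X⟧}

lemma map_neg_one (hv : IsAddVal v) : v (-1) = 0 := by
  have h := hv.map_mul (-1) (-1)
  rw [neg_mul_neg, one_mul, hv.map_one] at h
  generalize v (-1) = w at h
  induction w using EReal.rec with
  | bot => simp at h
  | top => simp at h
  | coe w => norm_cast at h ⊢; linarith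

lemma map_neg (hv : IsAddVal v) (x : R) : v (-x) = v x := by
  rw [neg_eq_neg_one_mul, hv.map_mul, hv.map_neg_one, zero_add]

lemma le_map_add_add (hv : IsAddVal v) {x y : R} {c d : EReal} (hx : c ≤ v x + d)
    (hy : c ≤ v y + d) : c ≤ v (x + y) + d :=
  calc c ≤ min (v x + d) (v y + d) := le_min hx hy
    _ = min (v x) (v y) + d := min_add_add_right _ _ _
    _ ≤ v (x + y) + d := by gcongr; exact hv.min_le_map_add x y

lemma le_map_sub_add (hv : IsAddVal v) {x y : R} {c d : EReal} (hx : c ≤ v x + d)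
    (hy : c ≤ v y + d) : c ≤ v (x - y) + d := by
  rw [sub_eq_add_neg]
  exact hv.le_map_add_add hx (by rwa [hv.map_neg])

lemma le_map_sum_add (hv : IsAddVal v) {ι : Type*} (s : Finset ι) (x : ι → R) {c : EReal}
    {d : ℝ} (hx : ∀ i ∈ s, c ≤ v (x i) + d) : c ≤ v (∑ i ∈ s, x i) + d := by
  induction s using Finset.cons_induction with
  | empty => simp [hv.map_zero]
  | cons i s hi ih =>
    rw [sum_cons]
    exact hv.le_map_add_add (hx i (mem_cons_self i s)) (ih fun j hj => hx j (mem_cons_of_mem hj))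

lemma map_pow_of_eq (hv : IsAddVal v) {x : R} {c : ℝ} (hx : v x = c) (n : ℕ) :
    v (x ^ n) = ((n * c : ℝ) : EReal) := by
  induction n with
  | zero => simp [hv.map_one]
  | succ n ih => rw [pow_succ, hv.map_mul, ih, hx, ← EReal.coe_add]; congr 1; push_cast; ring

lemma map_one_sub (hv : IsAddVal v) {y : R} (hy : 0 < v y) : v (1 - y) = 0 := by
  have hle : 0 ≤ v (1 - y) := by
    simpa [hv.map_one] using hv.le_map_sub_add (c := 0) (d := 0) (x := 1) (y := y)
      (by simp [hv.map_one]) (by simpa using hy.le)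
  refine le_antisymm (not_lt.1 fun hlt => ?_) hle
  have := hv.min_le_map_add (1 - y) y
  rw [sub_add_cancel, hv.map_one] at this
  exact (lt_min hlt hy).not_ge this

lemma map_sub_pow (hv : IsAddVal v) {π : R} {ε : ℝ} (hε : 0 < ε) (hπ : v π = ε) {k : ℕ}
    (hk : 2 ≤ k) : v (π - π ^ k) = ε := by
  obtain ⟨k, rfl⟩ := Nat.exists_eq_add_of_le' hk
  have hpos : 0 < v (π ^ (k + 1)) := by
    rw [hv.map_pow_of_eq hπ]
    exact_mod_cast mul_pos (by positivity) hε
  rw [show π - π ^ (k + 1 + 1) = π * (1 - π ^ (k + 1)) by ring, hv.map_mul, hv.map_one_sub hpos,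
    add_zero, hπ]

lemma le_gaussVal_zero (hv : IsAddVal v) (c : EReal) : c ≤ gaussVal v t 0 :=
  le_gaussVal_iff.2 fun n => by rw [_root_.map_zero, hv.map_zero, EReal.top_add_coe]; exact le_top

lemma le_gaussVal_add (hv : IsAddVal v) {c : EReal} (hf : c ≤ gaussVal v t f)
    (hg : c ≤ gaussVal v t g) : c ≤ gaussVal v t (f + g) :=
  le_gaussVal_iff.2 fun n => by
    simpa using hv.le_map_add_add (le_gaussVal_iff.1 hf n) (le_gaussVal_iff.1 hg n)

lemma le_gaussVal_sum (hv : IsAddVal v) {ι : Type*} (s : Finset ι) (F : ι → R⟦X⟧) {c : EReal}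
    (hF : ∀ i ∈ s, c ≤ gaussVal v t (F i)) : c ≤ gaussVal v t (∑ i ∈ s, F i) :=
  le_gaussVal_iff.2 fun n => by
    simpa [map_sum] using hv.le_map_sum_add s _ fun i hi => le_gaussVal_iff.1 (hF i hi) n

lemma add_le_map_mul_add (hv : IsAddVal v) {x y : R} {a b : EReal} {i j : ℕ}
    (hx : a ≤ v x + ((i * t : ℝ) : EReal)) (hy : b ≤ v y + ((j * t : ℝ) : EReal)) :
    a + b ≤ v (x * y) + ((((i + j : ℕ) : ℝ) * t : ℝ) : EReal) :=
  calc a + b ≤ (v x + ((i * t : ℝ) : EReal)) + (v y + ((j * t : ℝ) : EReal)) := add_le_add hx hy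
    _ = v (x * y) + ((((i + j : ℕ) : ℝ) * t : ℝ) : EReal) := by
      rw [hv.map_mul, Nat.cast_add, add_mul, EReal.coe_add]; abel

lemma add_le_gaussVal_mul (hv : IsAddVal v) :
    gaussVal v t f + gaussVal v t g ≤ gaussVal v t (f * g) :=
  le_gaussVal_iff.2 fun n => by
    rw [coeff_mul]
    refine hv.le_map_sum_add _ _ fun p hp => ?_
    rw [← mem_antidiagonal.1 hp]
    exact hv.add_le_map_mul_add (gaussVal_le p.1) (gaussVal_le p.2)

lemma zero_le_gaussVal_one (hv : IsAddVal v) : 0 ≤ gaussVal v t 1 :=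
  le_gaussVal_iff.2 fun n => by
    rcases eq_or_ne n 0 with rfl | hn
    · simp [hv.map_one]
    · simp only [coeff_one, if_neg hn, hv.map_zero, EReal.top_add_coe, le_top]

lemma le_gaussVal_X (hv : IsAddVal v) : (t : EReal) ≤ gaussVal v t X :=
  le_gaussVal_iff.2 fun n => by
    rcases eq_or_ne n 1 with rfl | hn
    · simp [hv.map_one]
    · simp only [coeff_X, if_neg hn, hv.map_zero, EReal.top_add_coe, le_top]

lemma le_gaussVal_C (hv : IsAddVal v) (a : R) : v a ≤ gaussVal v t (C a) :=
  le_gaussVal_iff.2 fun n => by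
    rcases eq_or_ne n 0 with rfl | hn
    · simp
    · simp only [coeff_C, if_neg hn, hv.map_zero, EReal.top_add_coe, le_top]

lemma le_gaussVal_pow (hv : IsAddVal v) {c : ℝ} (hf : (c : EReal) ≤ gaussVal v t f) (m : ℕ) :
    ((m * c : ℝ) : EReal) ≤ gaussVal v t (f ^ m) := by
  induction m with
  | zero => simpa using hv.zero_le_gaussVal_one
  | succ m ih =>
    rw [pow_succ]
    refine le_trans ?_ hv.add_le_gaussVal_mul
    rw [Nat.cast_succ, add_one_mul, EReal.coe_add]
    exact add_le_add ih hf

lemma le_gaussVal_of_coeff_zero (hv : IsAddVal v) (ht : 0 ≤ t) (hg0 : coeff 0 g = 0)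
    (hint : ∀ n, 0 ≤ v (coeff n g)) : (t : EReal) ≤ gaussVal v t g :=
  le_gaussVal_iff.2 fun n => by
    rcases n.eq_zero_or_pos with rfl | hn
    · simp [hg0, hv.map_zero]
    · calc (t : EReal) ≤ ((n * t : ℝ) : EReal) := by
            exact_mod_cast le_mul_of_one_le_left ht (by exact_mod_cast hn)
        _ ≤ v (coeff n g) + ((n * t : ℝ) : EReal) := le_add_of_nonneg_left (hint n)

lemma add_le_gaussVal_evalSeq (hv : IsAddVal v) {G : ℕ → R⟦X⟧} {c : ℝ}
    (hG : ∀ m : ℕ, ((c + m * t : ℝ) : EReal) ≤ gaussVal v t (G m)) :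
    gaussVal v t f + c ≤ gaussVal v t (evalSeq f G) :=
  le_gaussVal_iff.2 fun n => by
    rw [evalSeq, coeff_mk]
    refine hv.le_map_sum_add _ _ fun m _ => ?_
    calc gaussVal v t f + c ≤ v (coeff m f) + ((m * t : ℝ) : EReal) + c := by
          gcongr; exact gaussVal_le m
      _ = v (coeff m f) + ((c + m * t : ℝ) : EReal) := by rw [EReal.coe_add]; abel
      _ ≤ v (coeff m f) + (v (coeff n (G m)) + ((n * t : ℝ) : EReal)) := by
          gcongr; exact le_gaussVal_iff.1 (hG m) n
      _ = v (coeff m f * coeff n (G m)) + ((n * t : ℝ) : EReal) := by rw [hv.map_mul, add_assoc]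

lemma le_gaussVal_geom_sum₂ (hv : IsAddVal v) (hg : (t : EReal) ≤ gaussVal v t g)
    (m : ℕ) : (((m - 1 : ℕ) * t : ℝ) : EReal) ≤
      gaussVal v t (∑ i ∈ range m, g ^ i * X ^ (m - 1 - i)) := by
  refine hv.le_gaussVal_sum _ _ fun i hi => le_trans ?_ hv.add_le_gaussVal_mul
  rw [← Nat.add_sub_of_le (Nat.le_sub_one_of_lt (mem_range.1 hi)), Nat.cast_add, add_mul,
    EReal.coe_add, Nat.add_sub_cancel_left]
  exact add_le_add (hv.le_gaussVal_pow hg i) (hv.le_gaussVal_pow hv.le_gaussVal_X _)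

lemma le_gaussVal_pow_sub_X_pow (hv : IsAddVal v) {c : ℝ}
    (hg : (t : EReal) ≤ gaussVal v t g) (hgX : ((c + t : ℝ) : EReal) ≤ gaussVal v t (g - X))
    (m : ℕ) : ((c + m * t : ℝ) : EReal) ≤ gaussVal v t (g ^ m - X ^ m) := by
  rcases m.eq_zero_or_pos with rfl | hm
  · simpa using hv.le_gaussVal_zero _
  rw [← geom_sum₂_mul]
  refine le_trans ?_ hv.add_le_gaussVal_mul
  calc ((c + m * t : ℝ) : EReal) = (((m - 1 : ℕ) * t : ℝ) : EReal) + ((c + t : ℝ) : EReal) := by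
        rw [← EReal.coe_add, Nat.cast_pred hm]; ring_nf
    _ ≤ _ := add_le_add (hv.le_gaussVal_geom_sum₂ hg m) hgX

theorem gaussVal_pscomp (hv : IsAddVal v) (ht : 0 ≤ t) (hg0 : coeff 0 g = 0)
    (hg1 : v (coeff 1 g) = 0) (hint : ∀ n, 0 ≤ v (coeff n g)) :
    gaussVal v t (pscomp f g) = gaussVal v t f := by
  have hpow : ∀ m : ℕ, ((0 + m * t : ℝ) : EReal) ≤ gaussVal v t (g ^ m) := fun m => by
    simpa using hv.le_gaussVal_pow (hv.le_gaussVal_of_coeff_zero ht hg0 hint) m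
  refine le_antisymm (le_gaussVal_iff.2 fun n => ?_) ?_
  · induction n using Nat.strong_induction_on with
    | _ n ih =>
    have hunit : v (coeff n f) = v (coeff n f * coeff 1 g ^ n) := by
      rw [hv.map_mul, hv.map_pow_of_eq (c := 0) (by simpa using hg1)]; simp
    have hsplit : coeff n f * coeff 1 g ^ n = coeff n (pscomp f g) -
        ∑ m ∈ range n, coeff m f * coeff n (g ^ m) := by
      rw [pscomp, coeff_mk, sum_range_succ, coeff_pow_self hg0]; ring
    rw [hunit, hsplit]
    refine hv.le_map_sub_add (gaussVal_le n) (hv.le_map_sum_add _ _ fun m hm => ?_)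
    calc gaussVal v t (pscomp f g) ≤ v (coeff m f) + ((m * t : ℝ) : EReal) := ih m (mem_range.1 hm)
      _ ≤ v (coeff m f) + (v (coeff n (g ^ m)) + ((n * t : ℝ) : EReal)) := by
          gcongr; simpa using le_gaussVal_iff.1 (hpow m) n
      _ = v (coeff m f * coeff n (g ^ m)) + ((n * t : ℝ) : EReal) := by rw [hv.map_mul, add_assoc]
  · rw [pscomp_eq_evalSeq]
    simpa using hv.add_le_gaussVal_evalSeq hpow

theorem add_le_gaussVal_pscomp_sub_self (hv : IsAddVal v) {c : ℝ}
    (hg : (t : EReal) ≤ gaussVal v t g) (hgX : ((c + t : ℝ) : EReal) ≤ gaussVal v t (g - X)) :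
    gaussVal v t f + c ≤ gaussVal v t (pscomp f g - f) := by
  rw [pscomp_sub_self]
  exact hv.add_le_gaussVal_evalSeq (hv.le_gaussVal_pow_sub_X_pow hg hgX)

lemma add_le_map_coeff_mul_of_lt (hv : IsAddVal v) {a b : EReal} {n : ℕ}
    (hf0 : coeff 0 f = 0) (hf : a ≤ gaussVal v t f)
    (hg : ∀ j < n, b ≤ v (coeff j g) + ((j * t : ℝ) : EReal)) :
    a + b ≤ v (coeff n (f * g)) + ((n * t : ℝ) : EReal) := by
  rw [coeff_mul]
  refine hv.le_map_sum_add _ _ fun p hp => ?_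
  rw [← mem_antidiagonal.1 hp]
  rcases p with ⟨_ | i, j⟩
  · rw [hf0, zero_mul, hv.map_zero, EReal.top_add_coe]; exact le_top
  · exact hv.add_le_map_mul_add (hf.trans (gaussVal_le _))
      (hg j (by rw [HasAntidiagonal.mem_antidiagonal] at hp; omega))

theorem le_gaussVal_sub_X_of_pscomp_eq (hv : IsAddVal v) {π : R} {ε B : ℝ} (hε : 0 < ε)
    (hπ : v π = ε) {q : ℕ} (hq : 2 ≤ q) (hg0 : coeff 0 g = 0)
    (hint : ∀ n, 0 ≤ v (coeff n g)) (hcomp : pscomp g (X ^ q + C π * X) = g ^ q + C π * g)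
    (hB : (B : EReal) ≤ v (coeff 1 g - 1)) :
    ((B + ε : ℝ) : EReal) ≤ gaussVal v ε (g - X) := by
  set P : R⟦X⟧ := X ^ q + C π * X
  have hP : ((0 : ℝ) : EReal) ≤ gaussVal v 0 P := by
    refine hv.le_gaussVal_add (by simpa using hv.le_gaussVal_pow (t := 0) hv.le_gaussVal_X q)
      (le_trans ?_ hv.add_le_gaussVal_mul)
    refine add_nonneg (le_trans ?_ (hv.le_gaussVal_C π)) hv.le_gaussVal_X
    rw [hπ]; exact_mod_cast hε.le
  have hPint : ∀ m n, 0 ≤ v (coeff n (P ^ m)) := fun m => by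
    simpa using le_gaussVal_zero_iff.1 (hv.le_gaussVal_pow hP m)
  have hS : (ε : EReal) ≤ gaussVal v ε (∑ i ∈ range q, g ^ i * X ^ (q - 1 - i)) := by
    refine le_trans ?_ (hv.le_gaussVal_geom_sum₂ (hv.le_gaussVal_of_coeff_zero hε.le hg0 hint) q)
    exact_mod_cast le_mul_of_one_le_left hε.le (by norm_cast; omega)
  refine le_gaussVal_iff.2 fun k => ?_
  induction k using Nat.strong_induction_on with
  | _ k ih =>
  match k, ih with
  | 0, _ => rw [map_sub, hg0, coeff_zero_X, sub_zero, hv.map_zero, EReal.top_add_coe]; exact le_top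
  | 1, _ => simpa [EReal.coe_add] using add_le_add hB (le_refl (ε : EReal))
  | k + 2, ih =>
    have hsum : ∀ m ∈ range (k + 2), ((B + ε : ℝ) : EReal) + ε ≤
        v (coeff m (g - X) * coeff (k + 2) (P ^ m)) + ((((k + 2 : ℕ) : ℝ) * ε : ℝ) : EReal) :=
      fun m hm => by
        have hPm : (ε : EReal) ≤ v (coeff (k + 2) (P ^ m)) + (((k + 2 - m : ℕ) * ε : ℝ) : EReal) :=
          le_add_of_nonneg_of_le (hPint m _) <| by
            have := mem_range.1 hm
            exact_mod_cast le_mul_of_one_le_left hε.le (by norm_cast; omega)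
        simpa [Nat.add_sub_cancel' (mem_range.1 hm).le] using
          hv.add_le_map_mul_add (ih m (mem_range.1 hm)) hPm
    have hmul := hv.le_map_sub_add (hv.le_map_sum_add _ _ hsum)
      (add_comm (ε : EReal) _ ▸
        hv.add_le_map_coeff_mul_of_lt (coeff_zero_geom_sum₂ hq hg0) hS fun j hj => ih j hj)
    rw [← coeff_sub_X_mul_sub_pow hq hcomp, hv.map_mul, hv.map_sub_pow hε hπ (by omega),
      add_right_comm] at hmul
    exact (EReal.addLECancellable_coe ε).add_le_add_iff_right.1 hmul

lemma le_gaussVal_of_le_gaussVal_of_integral (hv : IsAddVal v) {h : R⟦X⟧} {c ε : ℝ} {N : ℕ}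
    (h0 : coeff 0 h = 0) (hint : ∀ n, 0 ≤ v (coeff n h)) (hε : 0 ≤ ε) (ht : 0 ≤ t)
    (hc : c ≤ N * t) (hh : ((c + (N + 1) * ε : ℝ) : EReal) ≤ gaussVal v ε h) :
    ((c + t : ℝ) : EReal) ≤ gaussVal v t h := by
  refine le_gaussVal_iff.2 fun k => ?_
  rcases k.eq_zero_or_pos with rfl | hk
  · rw [h0, hv.map_zero, EReal.top_add_coe]; exact le_top
  have hk' : (1 : ℝ) ≤ k := by exact_mod_cast hk
  rcases le_or_gt k (N + 1) with hkN | hkN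
  · have hkN' : (k : ℝ) ≤ N + 1 := by exact_mod_cast hkN
    refine (EReal.addLECancellable_coe (k * ε)).add_le_add_iff_right.1 ?_
    calc ((c + t : ℝ) : EReal) + ((k * ε : ℝ) : EReal)
        ≤ ((c + (N + 1) * ε : ℝ) : EReal) + ((k * t : ℝ) : EReal) := by
          rw [← EReal.coe_add, ← EReal.coe_add, EReal.coe_le_coe_iff]; nlinarith
      _ ≤ v (coeff k h) + ((k * ε : ℝ) : EReal) + ((k * t : ℝ) : EReal) := by
          gcongr; exact le_gaussVal_iff.1 hh k
      _ = v (coeff k h) + ((k * t : ℝ) : EReal) + ((k * ε : ℝ) : EReal) := add_right_comm _ _ _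
  · have hkN' : (N : ℝ) + 1 ≤ k := by exact_mod_cast hkN.le
    calc ((c + t : ℝ) : EReal) ≤ ((k * t : ℝ) : EReal) := by
          rw [EReal.coe_le_coe_iff]; nlinarith
      _ ≤ v (coeff k h) + ((k * t : ℝ) : EReal) := le_add_of_nonneg_left (hint k)

theorem add_one_le_gaussVal_pscomp_sub_self (hv : IsAddVal v) {π : R} {ε : ℝ} (hε : 0 < ε)
    (hπ : v π = ε) {q : ℕ} (hq : 2 ≤ q) (hg0 : coeff 0 g = 0)
    (hint : ∀ n, 0 ≤ v (coeff n g)) (hcomp : pscomp g (X ^ q + C π * X) = g ^ q + C π * g)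
    {N : ℕ} (ht : 0 ≤ t) (hNt : 1 ≤ N * t)
    (hg1 : ((1 + N * ε : ℝ) : EReal) ≤ v (coeff 1 g - 1)) :
    gaussVal v t f + 1 ≤ gaussVal v t (pscomp f g - f) := by
  have hintX : ∀ n, 0 ≤ v (coeff n (g - X)) := fun n => by
    rcases eq_or_ne n 1 with rfl | hn
    · simpa using le_trans (by exact_mod_cast by positivity) hg1
    · simpa [coeff_X, hn] using hint n
  have hgX := hv.le_gaussVal_sub_X_of_pscomp_eq hε hπ hq hg0 hint hcomp hg1
  have hgX' : ((1 + t : ℝ) : EReal) ≤ gaussVal v t (g - X) :=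
    hv.le_gaussVal_of_le_gaussVal_of_integral (by rw [map_sub, hg0, coeff_zero_X, sub_zero])
      hintX hε.le ht hNt (by ring_nf at hgX ⊢; exact hgX)
  simpa using hv.add_le_gaussVal_pscomp_sub_self (c := 1)
    (hv.le_gaussVal_of_coeff_zero ht hg0 hint) hgX'

end IsAddVal

/-- Let `L` be a field (containing `F`) with valuation `v` extending `v_p`
(`v π = 1/e`, `q` the residue cardinality).  For `a ∈ O_F`, `[a]` (here `sa`) denotes the power
series in `O_F[[X]]` with `[a](X) ≡ aX mod X²` and `[a]∘[π] = [π]∘[a]`, `[π](X) = X^q + π X`.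
With `v^{[s,r]}(f) := ⨅_{t∈[s,r]} ⨅_n (v (coeff n f) + n t)`:
(i) for every `a ∈ O_F^×`, every `f ∈ L[[u]]` and all `0 < s ≤ r`,
    `v^{[s,r]}(f∘[a]) = v^{[s,r]}(f)`;
(ii) for all `0 < s ≤ r` there exists `N` such that for every `a ∈ 1 + π^N O_F`
    (i.e. `v (a-1) ≥ N/e`) and every `f ∈ L[[u]]`,
    `v^{[s,r]}(f∘[a] - f) ≥ v^{[s,r]}(f) + 1`. -/
theorem stmt_16
    (L : Type*) [Field L]
    (v : L → EReal)
    (hv0 : v 0 = ⊤) (hv1 : v 1 = 0)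
    (hvmul : ∀ x y : L, v (x * y) = v x + v y)
    (hvadd : ∀ x y : L, min (v x) (v y) ≤ v (x + y))
    (π : L) (q e : ℕ) (hq : 2 ≤ q) (he : 0 < e)
    (hπ : v π = ((1 / (e : ℝ) : ℝ) : EReal)) :
    -- (i)
    (∀ a : L, v a = 0 →
      ∀ sa : PowerSeries L,
        PowerSeries.coeff 0 sa = 0 → PowerSeries.coeff 1 sa = a →
        (∀ n : ℕ, (0 : EReal) ≤ v (PowerSeries.coeff n sa)) →
        pscomp sa (PowerSeries.X ^ q + PowerSeries.C π * PowerSeries.X)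
          = sa ^ q + PowerSeries.C π * sa →
        ∀ f : PowerSeries L, ∀ s r : ℝ, 0 < s → s ≤ r →
          (⨅ t : Set.Icc s r, ⨅ n : ℕ,
              (v (PowerSeries.coeff n (pscomp f sa)) + (((n : ℝ) * (t : ℝ) : ℝ) : EReal)))
            = ⨅ t : Set.Icc s r, ⨅ n : ℕ,
                (v (PowerSeries.coeff n f) + (((n : ℝ) * (t : ℝ) : ℝ) : EReal))) ∧
    -- (ii)
    (∀ s r : ℝ, 0 < s → s ≤ r →
      ∃ N : ℕ, ∀ a : L, (((N : ℝ) / (e : ℝ) : ℝ) : EReal) ≤ v (a - 1) →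
        ∀ sa : PowerSeries L,
          PowerSeries.coeff 0 sa = 0 → PowerSeries.coeff 1 sa = a →
          (∀ n : ℕ, (0 : EReal) ≤ v (PowerSeries.coeff n sa)) →
          pscomp sa (PowerSeries.X ^ q + PowerSeries.C π * PowerSeries.X)
            = sa ^ q + PowerSeries.C π * sa →
          ∀ f : PowerSeries L,
            (⨅ t : Set.Icc s r, ⨅ n : ℕ,
                (v (PowerSeries.coeff n f) + (((n : ℝ) * (t : ℝ) : ℝ) : EReal))) + 1
              ≤ ⨅ t : Set.Icc s r, ⨅ n : ℕ,
                  (v (PowerSeries.coeff n (pscomp f sa - f))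
                    + (((n : ℝ) * (t : ℝ) : ℝ) : EReal))) := by
  have hv : IsAddVal v := ⟨hv0, hv1, hvmul, hvadd⟩
  refine ⟨fun a ha sa h0 h1 hint _ f s r hs _ => ?_, fun s r hs _ => ?_⟩
  · exact iInf_congr fun t => hv.gaussVal_pscomp (hs.trans_le t.2.1).le h0 (h1 ▸ ha) hint
  refine ⟨e + ⌈1 / s⌉₊, fun a ha sa h0 h1 hint hcomp f => le_iInf fun t => ?_⟩
  have hNt : 1 ≤ (⌈1 / s⌉₊ : ℝ) * t :=
    calc 1 = 1 / s * s := by field_simp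
      _ ≤ ⌈1 / s⌉₊ * t := mul_le_mul (Nat.le_ceil _) t.2.1 hs.le (Nat.cast_nonneg _)
  have hsa1 : ((1 + ⌈1 / s⌉₊ * (1 / e) : ℝ) : EReal) ≤ v (PowerSeries.coeff 1 sa - 1) := by
    rw [h1]
    convert ha using 2
    field_simp
    push_cast
    ring
  exact (add_le_add (iInf_le _ t) le_rfl).trans <| hv.add_one_le_gaussVal_pscomp_sub_self
    (by positivity) hπ hq h0 hint hcomp (hs.trans_le t.2.1).le hNt hsa1
end
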